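/- arXiv:1901.06218 — 10 statements merged into one kernel-verified Lean document; each statement's English description precedes it below -/
import Mathlib

section
/- For every β ∈ (0,1), the function F_l(μ,β) = −(μ·ln((1−μ)·β + μ) + (1−μ)·ln(μ·β + (1−μ))) on [0,1] attains its maximum value −ln((1+β)/2) uniquely at μ = 1/2; that is, F_l(μ,β) ≤ −ln((1+β)/2) for all μ ∈ [0,1], with equality if and only if μ = 1/2. -/
/-!
Each logarithm is compared with the midpoint `m = (1 + β) / 2` through `log x ≤ x - 1`, giving
`log m ≤ μ log a + (1 - μ) log b - (1 - μ m / a - (1 - μ) m / b)` for the two arguments `a`, `b`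
of the logarithms in `Fl`. Since `a + b = 2m`, the defect `1 - μ m / a - (1 - μ) m / b` is the
explicit quantity `FlGap μ β`, a positive multiple of `(1 - 2μ)²` when `0 < β < 1`.
-/

noncomputable def Fl (μ β : ℝ) : ℝ :=
  -(μ * Real.log ((1 - μ) * β + μ) + (1 - μ) * Real.log (μ * β + (1 - μ)))

open Real

noncomputable def FlGap (μ β : ℝ) : ℝ :=
  β * (1 - β) * (1 - 2 * μ) ^ 2 / (2 * ((1 - μ) * β + μ) * (μ * β + (1 - μ)))

lemma log_add_one_sub_weighted_div_le {w a b m : ℝ} (hw0 : 0 ≤ w) (hw1 : w ≤ 1)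
    (ha : 0 < a) (hb : 0 < b) (hm : 0 < m) :
    log m + (1 - (w * (m / a) + (1 - w) * (m / b))) ≤ w * log a + (1 - w) * log b := by
  have hma : log m - log a ≤ m / a - 1 := by
    rw [← log_div hm.ne' ha.ne']
    exact log_le_sub_one_of_pos (by positivity)
  have hmb : log m - log b ≤ m / b - 1 := by
    rw [← log_div hm.ne' hb.ne']
    exact log_le_sub_one_of_pos (by positivity)
  linarith [mul_le_mul_of_nonneg_left hma hw0, mul_le_mul_of_nonneg_left hmb (sub_nonneg.2 hw1)]

section

variable {μ β : ℝ}

lemma Fl_args_pos (hβ : 0 < β) (hμ0 : 0 ≤ μ) (hμ1 : μ ≤ 1) :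
    0 < (1 - μ) * β + μ ∧ 0 < μ * β + (1 - μ) := by
  rcases le_total β 1 with h | h <;>
    constructor <;>
    nlinarith [mul_nonneg hμ0 (sub_nonneg.2 h), mul_nonneg (sub_nonneg.2 hμ1) (sub_nonneg.2 h)]

lemma one_sub_weighted_div_eq_FlGap (ha : (1 - μ) * β + μ ≠ 0) (hb : μ * β + (1 - μ) ≠ 0) :
    1 - (μ * ((1 + β) / 2 / ((1 - μ) * β + μ)) + (1 - μ) * ((1 + β) / 2 / (μ * β + (1 - μ))))
      = FlGap μ β := by
  rw [FlGap]
  generalize hA : (1 - μ) * β + μ = a at ha ⊢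
  generalize hB : μ * β + (1 - μ) = b at hb ⊢
  field_simp
  subst hA hB
  ring

lemma Fl_add_FlGap_le (hβ : 0 < β) (hμ0 : 0 ≤ μ) (hμ1 : μ ≤ 1) :
    Fl μ β + FlGap μ β ≤ -log ((1 + β) / 2) := by
  obtain ⟨ha, hb⟩ := Fl_args_pos hβ hμ0 hμ1
  have := log_add_one_sub_weighted_div_le hμ0 hμ1 ha hb (by linarith : 0 < (1 + β) / 2)
  rw [one_sub_weighted_div_eq_FlGap ha.ne' hb.ne'] at this
  rw [Fl]
  linarith

lemma FlGap_nonneg (hβ0 : 0 < β) (hβ1 : β ≤ 1) (hμ0 : 0 ≤ μ) (hμ1 : μ ≤ 1) :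
    0 ≤ FlGap μ β := by
  obtain ⟨ha, hb⟩ := Fl_args_pos hβ0 hμ0 hμ1
  have : 0 ≤ 1 - β := by linarith
  unfold FlGap
  positivity

lemma FlGap_pos (hβ0 : 0 < β) (hβ1 : β < 1) (hμ0 : 0 ≤ μ) (hμ1 : μ ≤ 1) (hμ : μ ≠ 1 / 2) :
    0 < FlGap μ β := by
  obtain ⟨ha, hb⟩ := Fl_args_pos hβ0 hμ0 hμ1
  have : 0 < 1 - β := by linarith
  have : 1 - 2 * μ ≠ 0 := fun h => hμ (by linarith)
  unfold FlGap
  positivity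

lemma Fl_half (β : ℝ) : Fl (1 / 2) β = -log ((1 + β) / 2) := by
  rw [Fl]
  ring_nf

end

/-- for every β ∈ (0,1), F_l(·,β) attains its maximum −ln((1+β)/2) on [0,1]
uniquely at μ = 1/2. -/
theorem Fl_le_max_and_eq_iff (β : ℝ) (hβ : β ∈ Set.Ioo (0:ℝ) 1)
    (μ : ℝ) (hμ : μ ∈ Set.Icc (0:ℝ) 1) :
    Fl μ β ≤ -Real.log ((1 + β) / 2) ∧
      (Fl μ β = -Real.log ((1 + β) / 2) ↔ μ = 1 / 2) := by
  obtain ⟨hβ0, hβ1⟩ := hβ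
  obtain ⟨hμ0, hμ1⟩ := hμ
  have hle := Fl_add_FlGap_le hβ0 hμ0 hμ1
  have hgap := FlGap_nonneg hβ0 hβ1.le hμ0 hμ1
  refine ⟨by linarith, fun heq => ?_, fun h => h ▸ Fl_half β⟩
  by_contra hne
  linarith [FlGap_pos hβ0 hβ1 hμ0 hμ1 hne]
end

section
/- Let β1, β2 ∈ (0,1). Then the function μ ↦ F_u(μ,β1,β2) has a unique maximizer μ*(β1,β2) on [0,1], and: (1) μ*(β1,β2) + μ*(β2,β1) = 1, and in particular μ*(β1,β2) = 1/2 if β1 = β2; (2) μ*(β1,β2) > (1−β1)/(2−β1−β2) if β1 > β2, and μ*(β1,β2) < (1−β1)/(2−β1−β2) if β1 < β2. -/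
open Set

/-- F_u(μ,β1,β2) = −(μ·ln((1−μ)·β1 + μ) + (1−μ)·ln(μ·β2 + (1−μ))). -/
noncomputable def Fu (μ β1 β2 : ℝ) : ℝ :=
  -(μ * Real.log ((1 - μ) * β1 + μ) + (1 - μ) * Real.log (μ * β2 + (1 - μ)))

namespace FuAux

/-- first derivative of `Fu · β1 β2`. -/
noncomputable def F1 (β1 β2 μ : ℝ) : ℝ :=
  Real.log (μ * β2 + (1 - μ)) - Real.log ((1 - μ) * β1 + μ)
    - μ * (1 - β1) / ((1 - μ) * β1 + μ) + (1 - β2) * (1 - μ) / (μ * β2 + (1 - μ))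

/-- second derivative of `Fu · β1 β2`. -/
noncomputable def F2 (β1 β2 μ : ℝ) : ℝ :=
  -((1 - β2) / (μ * β2 + (1 - μ))) - (1 - β1) / ((1 - μ) * β1 + μ)
    - (1 - β1) * β1 / ((1 - μ) * β1 + μ) ^ 2 - (1 - β2) * β2 / (μ * β2 + (1 - μ)) ^ 2

variable {β1 β2 μ : ℝ}

lemma hasDerivAt_A : HasDerivAt (fun x : ℝ => (1 - x) * β1 + x) (1 - β1) μ := by
  have h := (((hasDerivAt_id μ).const_sub 1).mul_const β1).add (hasDerivAt_id μ)
  refine h.congr_deriv (Eq.symm ?_)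
  ring

lemma hasDerivAt_B : HasDerivAt (fun x : ℝ => x * β2 + (1 - x)) (β2 - 1) μ := by
  have h := ((hasDerivAt_id μ).mul_const β2).add ((hasDerivAt_id μ).const_sub 1)
  refine h.congr_deriv (Eq.symm ?_)
  ring

lemma hasDerivAt_Fu (hA : 0 < (1 - μ) * β1 + μ) (hB : 0 < μ * β2 + (1 - μ)) :
    HasDerivAt (fun x => Fu x β1 β2) (F1 β1 β2 μ) μ := by
  have hlogA := (hasDerivAt_A (β1 := β1) (μ := μ)).log hA.ne'
  have hlogB := (hasDerivAt_B (β2 := β2) (μ := μ)).log hB.ne'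
  have h1 := (hasDerivAt_id μ).mul hlogA
  have h2 := ((hasDerivAt_id μ).const_sub 1).mul hlogB
  have h := (h1.add h2).neg
  refine h.congr_deriv (Eq.symm ?_)
  unfold F1
  simp only [id_eq]
  field_simp
  ring

lemma hasDerivAt_F1 (hA : 0 < (1 - μ) * β1 + μ) (hB : 0 < μ * β2 + (1 - μ)) :
    HasDerivAt (F1 β1 β2) (F2 β1 β2 μ) μ := by
  have hlogA := (hasDerivAt_A (β1 := β1) (μ := μ)).log hA.ne'
  have hlogB := (hasDerivAt_B (β2 := β2) (μ := μ)).log hB.ne'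
  have h3 : HasDerivAt (fun x : ℝ => x * (1 - β1) / ((1 - x) * β1 + x))
      (((1 - β1) * ((1 - μ) * β1 + μ) - μ * (1 - β1) * (1 - β1)) / ((1 - μ) * β1 + μ) ^ 2) μ := by
    have := ((hasDerivAt_id μ).mul_const (1 - β1)).div (hasDerivAt_A (β1 := β1) (μ := μ)) hA.ne'
    simp only [id_eq] at this
    refine this.congr_deriv (Eq.symm ?_)
    ring
  have h4 : HasDerivAt (fun x : ℝ => (1 - β2) * (1 - x) / (x * β2 + (1 - x)))
      ((-(1 - β2) * (μ * β2 + (1 - μ)) - (1 - β2) * (1 - μ) * (β2 - 1)) / (μ * β2 + (1 - μ)) ^ 2) μ := by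
    have := (((hasDerivAt_id μ).const_sub 1).const_mul (1 - β2)).div
      (hasDerivAt_B (β2 := β2) (μ := μ)) hB.ne'
    simp only [id_eq] at this
    refine this.congr_deriv (Eq.symm ?_)
    ring
  have h := ((hlogB.sub hlogA).sub h3).add h4
  refine h.congr_deriv (Eq.symm ?_)
  unfold F2
  field_simp
  ring

/-- set where both log-arguments are positive -/
def U (β1 β2 : ℝ) : Set ℝ := {μ | 0 < (1 - μ) * β1 + μ ∧ 0 < μ * β2 + (1 - μ)}

lemma isOpen_U : IsOpen (U β1 β2) := by
  have h1 : IsOpen {μ : ℝ | 0 < (1 - μ) * β1 + μ} :=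
    isOpen_lt continuous_const (by continuity)
  have h2 : IsOpen {μ : ℝ | 0 < μ * β2 + (1 - μ)} :=
    isOpen_lt continuous_const (by continuity)
  exact h1.inter h2

lemma Icc_subset_U (hβ1 : β1 ∈ Ioo (0:ℝ) 1) (hβ2 : β2 ∈ Ioo (0:ℝ) 1) :
    Icc (0:ℝ) 1 ⊆ U β1 β2 := by
  rintro μ ⟨h0, h1⟩
  constructor
  · nlinarith [hβ1.1, hβ1.2]
  · nlinarith [hβ2.1, hβ2.2]

lemma F2_neg (hβ1 : β1 ∈ Ioo (0:ℝ) 1) (hβ2 : β2 ∈ Ioo (0:ℝ) 1) (hμ : μ ∈ U β1 β2) :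
    F2 β1 β2 μ < 0 := by
  obtain ⟨hA, hB⟩ := hμ
  unfold F2
  have h1 : 0 < (1 - β2) / (μ * β2 + (1 - μ)) := div_pos (by linarith [hβ2.2]) hB
  have h2 : 0 < (1 - β1) / ((1 - μ) * β1 + μ) := div_pos (by linarith [hβ1.2]) hA
  have h3 : 0 < (1 - β1) * β1 / ((1 - μ) * β1 + μ) ^ 2 :=
    div_pos (mul_pos (by linarith [hβ1.2]) hβ1.1) (by positivity)
  have h4 : 0 < (1 - β2) * β2 / (μ * β2 + (1 - μ)) ^ 2 :=
    div_pos (mul_pos (by linarith [hβ2.2]) hβ2.1) (by positivity)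
  linarith

lemma deriv_Fu_eq (hμ : μ ∈ U β1 β2) :
    deriv (fun x => Fu x β1 β2) μ = F1 β1 β2 μ :=
  (hasDerivAt_Fu hμ.1 hμ.2).deriv

lemma deriv2_Fu_eq (hμ : μ ∈ U β1 β2) :
    deriv^[2] (fun x => Fu x β1 β2) μ = F2 β1 β2 μ := by
  have hev : deriv (fun x => Fu x β1 β2) =ᶠ[nhds μ] F1 β1 β2 :=
    Filter.eventually_of_mem (isOpen_U.mem_nhds hμ) (fun y hy => deriv_Fu_eq hy)
  show deriv (deriv (fun x => Fu x β1 β2)) μ = _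
  rw [hev.deriv_eq]
  exact (hasDerivAt_F1 hμ.1 hμ.2).deriv

lemma continuousOn_Fu (hβ1 : β1 ∈ Ioo (0:ℝ) 1) (hβ2 : β2 ∈ Ioo (0:ℝ) 1) :
    ContinuousOn (fun x => Fu x β1 β2) (Icc (0:ℝ) 1) := fun x hx => by
  have h := Icc_subset_U hβ1 hβ2 hx
  exact (hasDerivAt_Fu h.1 h.2).continuousAt.continuousWithinAt

lemma strictConcaveOn_Fu (hβ1 : β1 ∈ Ioo (0:ℝ) 1) (hβ2 : β2 ∈ Ioo (0:ℝ) 1) :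
    StrictConcaveOn ℝ (Icc (0:ℝ) 1) (fun x => Fu x β1 β2) := by
  apply strictConcaveOn_of_deriv2_neg (convex_Icc 0 1) (continuousOn_Fu hβ1 hβ2)
  intro x hx
  rw [interior_Icc] at hx
  have hxU : x ∈ U β1 β2 := Icc_subset_U hβ1 hβ2 (Ioo_subset_Icc_self hx)
  rw [deriv2_Fu_eq hxU]
  exact F2_neg hβ1 hβ2 hxU

lemma exists_max (hβ1 : β1 ∈ Ioo (0:ℝ) 1) (hβ2 : β2 ∈ Ioo (0:ℝ) 1) :
    ∃ μ, μ ∈ Icc (0:ℝ) 1 ∧ IsMaxOn (fun x => Fu x β1 β2) (Icc (0:ℝ) 1) μ := by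
  obtain ⟨x, hx, hmax⟩ := isCompact_Icc.exists_isMaxOn (by simp : (Icc (0:ℝ) 1).Nonempty)
    (continuousOn_Fu hβ1 hβ2)
  exact ⟨x, hx, hmax⟩

lemma strictAntiOn_F1 (hβ1 : β1 ∈ Ioo (0:ℝ) 1) (hβ2 : β2 ∈ Ioo (0:ℝ) 1) :
    StrictAntiOn (F1 β1 β2) (Icc (0:ℝ) 1) := by
  apply strictAntiOn_of_deriv_neg (convex_Icc 0 1)
  · intro x hx
    have h := Icc_subset_U hβ1 hβ2 hx
    exact (hasDerivAt_F1 h.1 h.2).continuousAt.continuousWithinAt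
  · intro x hx
    rw [interior_Icc] at hx
    have hxU : x ∈ U β1 β2 := Icc_subset_U hβ1 hβ2 (Ioo_subset_Icc_self hx)
    rw [(hasDerivAt_F1 hxU.1 hxU.2).deriv]
    exact F2_neg hβ1 hβ2 hxU

lemma Fu_zero : Fu 0 β1 β2 = 0 := by simp [Fu]
lemma Fu_one : Fu 1 β1 β2 = 0 := by simp [Fu]

lemma Fu_half_pos (hβ1 : β1 ∈ Ioo (0:ℝ) 1) (hβ2 : β2 ∈ Ioo (0:ℝ) 1) :
    0 < Fu (1/2) β1 β2 := by
  have h1 : Real.log ((1 - 1/2) * β1 + 1/2) < 0 :=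
    Real.log_neg (by linarith [hβ1.1]) (by linarith [hβ1.2])
  have h2 : Real.log ((1/2 : ℝ) * β2 + (1 - 1/2)) < 0 :=
    Real.log_neg (by linarith [hβ2.1]) (by linarith [hβ2.2])
  unfold Fu
  nlinarith

lemma Fu_symm : Fu (1 - μ) β2 β1 = Fu μ β1 β2 := by
  unfold Fu
  ring_nf

/-- value of F1 at the threshold point -/
lemma F1_at_t (hβ1 : β1 ∈ Ioo (0:ℝ) 1) (hβ2 : β2 ∈ Ioo (0:ℝ) 1) :
    F1 β1 β2 ((1 - β1) / (2 - β1 - β2))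
      = (β1 - β2) * ((2 - β1 - β2) / (1 - β1 * β2)) := by
  set t : ℝ := (1 - β1) / (2 - β1 - β2) with ht
  have hd : (0:ℝ) < 2 - β1 - β2 := by linarith [hβ1.2, hβ2.2]
  have hAB : (1 - t) * β1 + t = t * β2 + (1 - t) := by
    rw [ht]
    field_simp
    ring
  have hval : (1 - t) * β1 + t = (1 - β1 * β2) / (2 - β1 - β2) := by
    rw [ht]
    field_simp
    ring
  have hApos : 0 < (1 - t) * β1 + t := by
    rw [hval]
    apply div_pos _ hd
    nlinarith [hβ1.1, hβ1.2, hβ2.1, hβ2.2]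
  unfold F1
  rw [← hAB, sub_self (Real.log ((1 - t) * β1 + t))]
  rw [hval]
  have h1 : (0:ℝ) < 1 - β1 * β2 := by nlinarith [hβ1.1, hβ1.2, hβ2.1, hβ2.2]
  rw [ht]
  field_simp
  ring

lemma t_mem (hβ1 : β1 ∈ Ioo (0:ℝ) 1) (hβ2 : β2 ∈ Ioo (0:ℝ) 1) :
    (1 - β1) / (2 - β1 - β2) ∈ Icc (0:ℝ) 1 := by
  have hd : (0:ℝ) < 2 - β1 - β2 := by linarith [hβ1.2, hβ2.2]
  constructor
  · exact div_nonneg (by linarith [hβ1.2]) hd.le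
  · rw [div_le_one hd]
    linarith [hβ2.2]

/-- the maximizer -/
noncomputable def muStar (β1 β2 : ℝ) : ℝ :=
  if h : β1 ∈ Ioo (0:ℝ) 1 ∧ β2 ∈ Ioo (0:ℝ) 1 then (exists_max h.1 h.2).choose else 0

lemma muStar_spec (hβ1 : β1 ∈ Ioo (0:ℝ) 1) (hβ2 : β2 ∈ Ioo (0:ℝ) 1) :
    muStar β1 β2 ∈ Icc (0:ℝ) 1 ∧
      IsMaxOn (fun x => Fu x β1 β2) (Icc (0:ℝ) 1) (muStar β1 β2) := by
  rw [muStar, dif_pos ⟨hβ1, hβ2⟩]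
  exact (exists_max hβ1 hβ2).choose_spec

lemma muStar_unique (hβ1 : β1 ∈ Ioo (0:ℝ) 1) (hβ2 : β2 ∈ Ioo (0:ℝ) 1)
    (hμ : μ ∈ Icc (0:ℝ) 1) (hmax : IsMaxOn (fun x => Fu x β1 β2) (Icc (0:ℝ) 1) μ) :
    μ = muStar β1 β2 :=
  (strictConcaveOn_Fu hβ1 hβ2).eq_of_isMaxOn hmax (muStar_spec hβ1 hβ2).2 hμ
    (muStar_spec hβ1 hβ2).1

lemma muStar_symm (hβ1 : β1 ∈ Ioo (0:ℝ) 1) (hβ2 : β2 ∈ Ioo (0:ℝ) 1) :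
    muStar β1 β2 + muStar β2 β1 = 1 := by
  obtain ⟨hmem, hmax⟩ := muStar_spec hβ1 hβ2
  have hmem' : 1 - muStar β1 β2 ∈ Icc (0:ℝ) 1 := by
    constructor <;> [linarith [hmem.2]; linarith [hmem.1]]
  have hmax' : IsMaxOn (fun x => Fu x β2 β1) (Icc (0:ℝ) 1) (1 - muStar β1 β2) := by
    intro ν hν
    have hν' : 1 - ν ∈ Icc (0:ℝ) 1 := by
      constructor <;> [linarith [hν.2]; linarith [hν.1]]
    have e1 : Fu ν β2 β1 = Fu (1 - ν) β1 β2 := by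
      nth_rewrite 1 [show ν = 1 - (1 - ν) by ring]
      exact Fu_symm
    have e2 : Fu (1 - muStar β1 β2) β2 β1 = Fu (muStar β1 β2) β1 β2 := Fu_symm
    simp only [Set.mem_setOf_eq]
    rw [e1, e2]
    exact hmax hν'
  have := muStar_unique hβ2 hβ1 hmem' hmax'
  linarith

lemma muStar_interior (hβ1 : β1 ∈ Ioo (0:ℝ) 1) (hβ2 : β2 ∈ Ioo (0:ℝ) 1) :
    muStar β1 β2 ∈ Ioo (0:ℝ) 1 := by
  obtain ⟨hmem, hmax⟩ := muStar_spec hβ1 hβ2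
  have hpos : 0 < Fu (muStar β1 β2) β1 β2 :=
    lt_of_lt_of_le (Fu_half_pos hβ1 hβ2) (hmax (by norm_num : (1/2 : ℝ) ∈ Icc (0:ℝ) 1))
  constructor
  · rcases lt_or_eq_of_le hmem.1 with h | h
    · exact h
    · exfalso; rw [← h, Fu_zero] at hpos; exact lt_irrefl 0 hpos
  · rcases lt_or_eq_of_le hmem.2 with h | h
    · exact h
    · exfalso; rw [h, Fu_one] at hpos; exact lt_irrefl 0 hpos

lemma F1_muStar_eq_zero (hβ1 : β1 ∈ Ioo (0:ℝ) 1) (hβ2 : β2 ∈ Ioo (0:ℝ) 1) :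
    F1 β1 β2 (muStar β1 β2) = 0 := by
  obtain ⟨hmem, hmax⟩ := muStar_spec hβ1 hβ2
  obtain ⟨h0, h1⟩ := muStar_interior hβ1 hβ2
  have hnhds : Icc (0:ℝ) 1 ∈ nhds (muStar β1 β2) := Icc_mem_nhds h0 h1
  have := (hmax.isLocalMax hnhds).deriv_eq_zero
  rwa [deriv_Fu_eq (Icc_subset_U hβ1 hβ2 hmem)] at this

lemma muStar_gt (hβ1 : β1 ∈ Ioo (0:ℝ) 1) (hβ2 : β2 ∈ Ioo (0:ℝ) 1) (h : β2 < β1) :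
    (1 - β1) / (2 - β1 - β2) < muStar β1 β2 := by
  have hd : (0:ℝ) < 2 - β1 - β2 := by linarith [hβ1.2, hβ2.2]
  have h1 : (0:ℝ) < 1 - β1 * β2 := by nlinarith [hβ1.1, hβ1.2, hβ2.1, hβ2.2]
  have ht : 0 < F1 β1 β2 ((1 - β1) / (2 - β1 - β2)) := by
    rw [F1_at_t hβ1 hβ2]
    have h2 : 0 < β1 - β2 := by linarith
    positivity
  by_contra hcon
  push_neg at hcon
  rcases lt_or_eq_of_le hcon with hlt | heq
  · have := strictAntiOn_F1 hβ1 hβ2 (muStar_spec hβ1 hβ2).1 (t_mem hβ1 hβ2) hlt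
    rw [F1_muStar_eq_zero hβ1 hβ2] at this
    linarith
  · rw [← heq, F1_muStar_eq_zero hβ1 hβ2] at ht
    linarith

lemma muStar_lt (hβ1 : β1 ∈ Ioo (0:ℝ) 1) (hβ2 : β2 ∈ Ioo (0:ℝ) 1) (h : β1 < β2) :
    muStar β1 β2 < (1 - β1) / (2 - β1 - β2) := by
  have hd : (0:ℝ) < 2 - β1 - β2 := by linarith [hβ1.2, hβ2.2]
  have h1 : (0:ℝ) < 1 - β1 * β2 := by nlinarith [hβ1.1, hβ1.2, hβ2.1, hβ2.2]
  have ht : F1 β1 β2 ((1 - β1) / (2 - β1 - β2)) < 0 := by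
    rw [F1_at_t hβ1 hβ2]
    have : β1 - β2 < 0 := by linarith
    have hq : 0 < (2 - β1 - β2) / (1 - β1 * β2) := by positivity
    exact mul_neg_of_neg_of_pos this hq
  by_contra hcon
  push_neg at hcon
  rcases lt_or_eq_of_le hcon with hlt | heq
  · have := strictAntiOn_F1 hβ1 hβ2 (t_mem hβ1 hβ2) (muStar_spec hβ1 hβ2).1 hlt
    rw [F1_muStar_eq_zero hβ1 hβ2] at this
    linarith
  · rw [heq, F1_muStar_eq_zero hβ1 hβ2] at ht
    linarith

end FuAux

/-- for β1, β2 ∈ (0,1), F_u(·,β1,β2) has a unique maximizer μ*(β1,β2) on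
[0,1], satisfying μ*(β1,β2) + μ*(β2,β1) = 1 (in particular μ* = 1/2 if β1 = β2), and
μ*(β1,β2) > (1−β1)/(2−β1−β2) if β1 > β2, μ*(β1,β2) < (1−β1)/(2−β1−β2) if β1 < β2. -/
theorem Fu_unique_maximizer_properties :
    ∃ μs : ℝ → ℝ → ℝ,
      ∀ β1 ∈ Set.Ioo (0:ℝ) 1, ∀ β2 ∈ Set.Ioo (0:ℝ) 1,
        μs β1 β2 ∈ Set.Icc (0:ℝ) 1 ∧
        (∀ μ ∈ Set.Icc (0:ℝ) 1, Fu μ β1 β2 ≤ Fu (μs β1 β2) β1 β2) ∧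
        (∀ μ ∈ Set.Icc (0:ℝ) 1,
          (∀ ν ∈ Set.Icc (0:ℝ) 1, Fu ν β1 β2 ≤ Fu μ β1 β2) → μ = μs β1 β2) ∧
        μs β1 β2 + μs β2 β1 = 1 ∧
        (β1 = β2 → μs β1 β2 = 1 / 2) ∧
        (β1 > β2 → μs β1 β2 > (1 - β1) / (2 - β1 - β2)) ∧
        (β1 < β2 → μs β1 β2 < (1 - β1) / (2 - β1 - β2)) := by
  refine ⟨FuAux.muStar, fun β1 hβ1 β2 hβ2 => ?_⟩
  obtain ⟨hmem, hmax⟩ := FuAux.muStar_spec hβ1 hβ2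
  refine ⟨hmem, fun μ hμ => hmax hμ, ?_, FuAux.muStar_symm hβ1 hβ2, ?_, ?_, ?_⟩
  · intro μ hμ hμmax
    exact FuAux.muStar_unique hβ1 hβ2 hμ (fun ν hν => hμmax ν hν)
  · intro heq
    subst heq
    have := FuAux.muStar_symm hβ1 hβ2
    linarith
  · exact fun h => FuAux.muStar_gt hβ1 hβ2 h
  · exact fun h => FuAux.muStar_lt hβ1 hβ2 h
end

section
/- Let β1, β2 ∈ (0,1). Then the maximum of F_u(μ,β1,β2) over μ ∈ [0,1] satisfies max_{0≤μ≤1} F_u(μ,β1,β2) ≤ |β1−β2|·(1−min{β1,β2})/(1−β1·β2) − ln((1−β1·β2)/(2−β1−β2)), with equality if and only if β1 = β2. -/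
open Real Set

lemma neg_log_le_div_sub_one_sub_log {a D : ℝ} (ha : 0 < a) (hD : 0 < D) :
    -log a ≤ D / a - 1 - log D := by
  have := log_le_sub_one_of_pos (div_pos hD ha)
  rw [log_div hD.ne' ha.ne'] at this
  linarith

lemma neg_weighted_log_le {μ a b D : ℝ} (hμ0 : 0 ≤ μ) (hμ1 : μ ≤ 1) (ha : 0 < a) (hb : 0 < b)
    (hD : 0 < D) :
    -(μ * log a + (1 - μ) * log b) ≤ D * (μ / a + (1 - μ) / b) - 1 - log D := by
  have ha' := mul_le_mul_of_nonneg_left (neg_log_le_div_sub_one_sub_log ha hD) hμ0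
  have hb' := mul_le_mul_of_nonneg_left (neg_log_le_div_sub_one_sub_log hb hD)
    (sub_nonneg.2 hμ1)
  linear_combination ha' + hb'

section

variable {s t μ : ℝ}

lemma one_sub_mul_sq_add_pos (hs : 0 < s) (hμ0 : 0 ≤ μ) (hμ1 : μ ≤ 1) :
    0 < (1 - μ) * s ^ 2 + μ := by
  nlinarith [mul_nonneg (sub_nonneg.2 hμ1) (sq_nonneg s), sq_pos_of_pos hs]

lemma div_add_div_le_two_div_one_add_mul (hs : 0 < s) (ht : 0 < t) (hst : s * t ≤ 1)
    (hμ0 : 0 ≤ μ) (hμ1 : μ ≤ 1) :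
    μ / ((1 - μ) * s ^ 2 + μ) + (1 - μ) / (μ * t ^ 2 + (1 - μ)) ≤ 2 / (1 + s * t) := by
  have ha := one_sub_mul_sq_add_pos hs hμ0 hμ1
  have hb : 0 < μ * t ^ 2 + (1 - μ) := by
    simpa [mul_comm] using one_sub_mul_sq_add_pos ht (sub_nonneg.2 hμ1) (sub_le_self 1 hμ0)
  rw [div_add_div _ _ ha.ne' hb.ne', div_le_div_iff₀ (mul_pos ha hb) (by positivity)]
  -- after clearing denominators the difference of the two sides is `(1 - st) ((s + t) μ - s)²`
  nlinarith [mul_nonneg (sub_nonneg.2 hst) (sq_nonneg ((s + t) * μ - s))]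

lemma Fu_sq_le (hs : 0 < s) (hs1 : s < 1) (ht : 0 < t) (ht1 : t < 1) (hμ : μ ∈ Icc 0 1) :
    Fu μ (s ^ 2) (t ^ 2) ≤
      (t - s) ^ 2 / (2 - s ^ 2 - t ^ 2) - log ((1 - s ^ 2 * t ^ 2) / (2 - s ^ 2 - t ^ 2)) := by
  obtain ⟨hμ0, hμ1⟩ := hμ
  have hS : 0 < 2 - s ^ 2 - t ^ 2 := by nlinarith
  have hst : s * t < 1 := by nlinarith
  set D := (1 - s ^ 2 * t ^ 2) / (2 - s ^ 2 - t ^ 2)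
  have hD : 0 < D := div_pos (by nlinarith [mul_pos hs ht]) hS
  calc Fu μ (s ^ 2) (t ^ 2)
      ≤ D * (μ / ((1 - μ) * s ^ 2 + μ) + (1 - μ) / (μ * t ^ 2 + (1 - μ))) - 1 - log D :=
        neg_weighted_log_le hμ0 hμ1 (one_sub_mul_sq_add_pos hs hμ0 hμ1)
          (by nlinarith [mul_nonneg hμ0 (sq_nonneg t)]) hD
    _ ≤ D * (2 / (1 + s * t)) - 1 - log D := by
        gcongr
        exact div_add_div_le_two_div_one_add_mul hs ht hst.le hμ0 hμ1
    _ = (t - s) ^ 2 / (2 - s ^ 2 - t ^ 2) - log D := by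
        have : 1 + s * t ≠ 0 := by positivity
        unfold D
        field_simp
        ring

lemma sub_mul_one_sub_sq_mul_sq_lt (hs : 0 < s) (hs1 : s < 1) (ht : 0 ≤ t) (ht1 : t ≤ 1) :
    (t - s) * (1 - s ^ 2 * t ^ 2) < (2 - s ^ 2 - t ^ 2) * (t + s) * (1 - s ^ 2) := by
  have hs2 : 0 < 1 - s ^ 2 := by nlinarith
  have ht2 : 0 ≤ 1 - t ^ 2 := by nlinarith
  have hts : 0 < 1 - t * s := by nlinarith
  have hA : 0 < s * ((1 - t * s) + (1 - s ^ 2)) := mul_pos hs (add_pos hts hs2)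
  have hB : 0 ≤ t * (1 - s ^ 2) + s * (1 - t * s) :=
    add_nonneg (mul_nonneg ht hs2.le) (mul_nonneg hs.le hts.le)
  calc (t - s) * (1 - s ^ 2 * t ^ 2)
      < (t - s) * (1 - s ^ 2 * t ^ 2) + ((1 - s ^ 2) * (s * ((1 - t * s) + (1 - s ^ 2)))
          + (1 - t ^ 2) * (t * (1 - s ^ 2) + s * (1 - t * s))) :=
        lt_add_of_pos_right _ (add_pos_of_pos_of_nonneg (mul_pos hs2 hA) (mul_nonneg ht2 hB))
    _ = (2 - s ^ 2 - t ^ 2) * (t + s) * (1 - s ^ 2) := by ring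

lemma sub_sq_div_lt (hs : 0 < s) (hst : s < t) (ht : t < 1) :
    (t - s) ^ 2 / (2 - s ^ 2 - t ^ 2) < (t ^ 2 - s ^ 2) * (1 - s ^ 2) / (1 - s ^ 2 * t ^ 2) := by
  have hs1 : s < 1 := hst.trans ht
  have hst1 : s * t < 1 := by nlinarith
  rw [div_lt_div_iff₀ (by nlinarith) (by nlinarith [mul_pos hs (hs.trans hst)])]
  have := mul_lt_mul_of_pos_left
    (sub_mul_one_sub_sq_mul_sq_lt hs hs1 (hs.trans hst).le ht.le) (sub_pos.2 hst)
  convert this using 1 <;> ring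

end

section

variable {β₁ β₂ : ℝ}

lemma Fu_le {μ : ℝ} (hβ₁ : β₁ ∈ Ioo 0 1) (hβ₂ : β₂ ∈ Ioo 0 1) (hμ : μ ∈ Icc 0 1) :
    Fu μ β₁ β₂ ≤
      (√β₂ - √β₁) ^ 2 / (2 - β₁ - β₂) - log ((1 - β₁ * β₂) / (2 - β₁ - β₂)) := by
  have h := Fu_sq_le (sqrt_pos.2 hβ₁.1) ((sqrt_lt_sqrt hβ₁.1.le hβ₁.2).trans_eq sqrt_one)
    (sqrt_pos.2 hβ₂.1) ((sqrt_lt_sqrt hβ₂.1.le hβ₂.2).trans_eq sqrt_one) hμ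
  rwa [sq_sqrt hβ₁.1.le, sq_sqrt hβ₂.1.le] at h

lemma sqrt_sub_sqrt_sq_div_lt (hβ₁ : β₁ ∈ Ioo 0 1) (hβ₂ : β₂ ∈ Ioo 0 1) (hne : β₁ ≠ β₂) :
    (√β₂ - √β₁) ^ 2 / (2 - β₁ - β₂) < |β₁ - β₂| * (1 - min β₁ β₂) / (1 - β₁ * β₂) := by
  wlog h : β₁ < β₂ generalizing β₁ β₂
  · have := this hβ₂ hβ₁ hne.symm (hne.lt_or_gt.resolve_left h)
    rw [abs_sub_comm, min_comm, mul_comm β₂] at this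
    convert this using 2 <;> ring
  have key := sub_sq_div_lt (sqrt_pos.2 hβ₁.1) (sqrt_lt_sqrt hβ₁.1.le h)
    ((sqrt_lt_sqrt hβ₂.1.le hβ₂.2).trans_eq sqrt_one)
  rw [sq_sqrt hβ₁.1.le, sq_sqrt hβ₂.1.le] at key
  rwa [abs_sub_comm, abs_of_pos (sub_pos.2 h), min_eq_left h.le]

lemma sqrt_sub_sqrt_sq_div_le (hβ₁ : β₁ ∈ Ioo 0 1) (hβ₂ : β₂ ∈ Ioo 0 1) :
    (√β₂ - √β₁) ^ 2 / (2 - β₁ - β₂) ≤ |β₁ - β₂| * (1 - min β₁ β₂) / (1 - β₁ * β₂) := by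
  rcases eq_or_ne β₁ β₂ with rfl | hne
  · simp
  · exact (sqrt_sub_sqrt_sq_div_lt hβ₁ hβ₂ hne).le

lemma Fu_half_self (hβ : β₁ < 1) :
    Fu (1 / 2) β₁ β₁ = -log ((1 - β₁ * β₁) / (2 - β₁ - β₁)) := by
  have hD : (1 - β₁ * β₁) / (2 - β₁ - β₁) = (1 - 1 / 2) * β₁ + 1 / 2 := by
    rw [div_eq_iff (by linarith)]
    ring
  rw [hD, Fu]
  ring_nf

end

/-- for β1, β2 ∈ (0,1),
max_{0≤μ≤1} F_u(μ,β1,β2) ≤ |β1−β2|·(1−min{β1,β2})/(1−β1·β2) − ln((1−β1·β2)/(2−β1−β2)),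
with equality if and only if β1 = β2. -/
theorem Fu_max_upper_bound (β1 β2 : ℝ) (hβ1 : β1 ∈ Set.Ioo (0:ℝ) 1)
    (hβ2 : β2 ∈ Set.Ioo (0:ℝ) 1) :
    (⨆ μ : Set.Icc (0:ℝ) 1, Fu μ β1 β2) ≤
        |β1 - β2| * (1 - min β1 β2) / (1 - β1 * β2) -
          Real.log ((1 - β1 * β2) / (2 - β1 - β2)) ∧
      ((⨆ μ : Set.Icc (0:ℝ) 1, Fu μ β1 β2) =
          |β1 - β2| * (1 - min β1 β2) / (1 - β1 * β2) -
            Real.log ((1 - β1 * β2) / (2 - β1 - β2)) ↔ β1 = β2) := by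
  have hbound (μ : Icc (0:ℝ) 1) := Fu_le hβ1 hβ2 μ.2
  have hsup := ciSup_le hbound
  have hle := hsup.trans (sub_le_sub_right (sqrt_sub_sqrt_sq_div_le hβ1 hβ2) _)
  refine ⟨hle, fun heq => ?_, ?_⟩
  · by_contra hne
    linarith [sqrt_sub_sqrt_sq_div_lt hβ1 hβ2 hne]
  · rintro rfl
    refine hle.antisymm ?_
    calc _ = Fu (1 / 2) β1 β1 := by rw [Fu_half_self hβ1.2]; simp
      _ ≤ ⨆ μ : Icc (0:ℝ) 1, Fu μ β1 β1 :=
        le_ciSup (f := fun μ : Icc (0:ℝ) 1 => Fu μ β1 β1) ⟨_, forall_mem_range.2 hbound⟩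
          ⟨1 / 2, by norm_num, by norm_num⟩
end

section
/- Let 0 < p0 < p1 < 1 and integer L ≥ 1, and set β = (√(p0·p1) + √((1−p0)·(1−p1)))^L. Then the maximum over priors μ ∈ [0,1] of the mutual information I(μ) of the binary-input channel whose output is Bin(L,p1) with probability μ and Bin(L,p0) with probability 1−μ satisfies sup_{μ∈[0,1]} I(μ) ≥ −ln((1+β)/2). -/
/-- The pmf of the binomial distribution Bin(L,p): q_k = C(L,k)·p^k·(1−p)^(L−k). -/
noncomputable def binomPmf (L : ℕ) (p : ℝ) (k : ℕ) : ℝ :=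
  (Nat.choose L k : ℝ) * p ^ k * (1 - p) ^ (L - k)

/-- Shannon entropy of a pmf on {0,…,L} (with 0·ln 0 = 0, via Real.log 0 = 0). -/
noncomputable def entropyOn (L : ℕ) (q : ℕ → ℝ) : ℝ :=
  -∑ k ∈ Finset.range (L + 1), q k * Real.log (q k)

/-- Mutual information of the binary-input channel whose output is Bin(L,p1) with
probability μ and Bin(L,p0) with probability 1−μ. -/
noncomputable def mutInfo (L : ℕ) (p0 p1 μ : ℝ) : ℝ :=
  entropyOn L (fun k => μ * binomPmf L p1 k + (1 - μ) * binomPmf L p0 k) -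
    μ * entropyOn L (binomPmf L p1) - (1 - μ) * entropyOn L (binomPmf L p0)

/- ### Auxiliary lemmas -/

lemma aux_sqrt_pow (x : ℝ) (h : 0 ≤ x) (k : ℕ) : Real.sqrt (x^k) = Real.sqrt x ^ k := by
  have h2 : (Real.sqrt x ^ k)^2 = x^k := by
    rw [← pow_mul, mul_comm, pow_mul, Real.sq_sqrt h]
  rw [← h2, Real.sqrt_sq (pow_nonneg (Real.sqrt_nonneg x) k)]

lemma aux_sum_binom (L : ℕ) (p : ℝ) : ∑ k ∈ Finset.range (L+1), binomPmf L p k = 1 := by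
  have h := add_pow p (1-p) L
  have h2 : ∑ k ∈ Finset.range (L+1), binomPmf L p k = (p + (1-p))^L := by
    rw [h]; exact Finset.sum_congr rfl (fun k _ => by unfold binomPmf; ring)
  rw [h2]; norm_num

lemma aux_binom_pos (L : ℕ) (p : ℝ) (h0 : 0 < p) (h1 : p < 1) {k : ℕ}
    (hk : k ∈ Finset.range (L+1)) : 0 < binomPmf L p k := by
  have hc : 0 < (Nat.choose L k : ℝ) := by
    have : k ≤ L := Nat.lt_succ_iff.mp (Finset.mem_range.mp hk)
    exact_mod_cast Nat.choose_pos this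
  have h1' : (0:ℝ) < 1 - p := by linarith
  unfold binomPmf
  positivity

lemma aux_binom_nonneg (L : ℕ) (p : ℝ) (h0 : 0 ≤ p) (h1 : p ≤ 1) (k : ℕ) :
    0 ≤ binomPmf L p k := by
  have h1' : (0:ℝ) ≤ 1 - p := by linarith
  unfold binomPmf; positivity

lemma aux_binom_le_one (L : ℕ) (p : ℝ) (h0 : 0 ≤ p) (h1 : p ≤ 1) {k : ℕ}
    (hk : k ∈ Finset.range (L+1)) : binomPmf L p k ≤ 1 := by
  calc binomPmf L p k ≤ ∑ j ∈ Finset.range (L+1), binomPmf L p j :=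
        Finset.single_le_sum (fun j _ => aux_binom_nonneg L p h0 h1 j) hk
    _ = 1 := aux_sum_binom L p

lemma aux_neg_xlogx_le_one {x : ℝ} (h0 : 0 ≤ x) (h1 : x ≤ 1) : -(x * Real.log x) ≤ 1 := by
  rcases eq_or_lt_of_le h0 with h|h
  · simp [← h]
  · have hinv := Real.log_le_sub_one_of_pos (inv_pos.mpr h)
    rw [Real.log_inv] at hinv
    have := mul_le_mul_of_nonneg_left hinv h0
    rw [mul_sub, mul_inv_cancel₀ (ne_of_gt h)] at this
    nlinarith

lemma aux_entropy_nonneg (L : ℕ) (q : ℕ → ℝ)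
    (h : ∀ k ∈ Finset.range (L+1), 0 ≤ q k ∧ q k ≤ 1) : 0 ≤ entropyOn L q := by
  unfold entropyOn
  rw [neg_nonneg]
  apply Finset.sum_nonpos
  intro k hk
  obtain ⟨h0, h1⟩ := h k hk
  exact mul_nonpos_of_nonneg_of_nonpos h0 (Real.log_nonpos h0 h1)

/-- Pointwise inequality: for a,b > 0 with m = (a+b)/2,
m·ln(2m/(m+√(ab))) ≤ (a/2)·ln a + (b/2)·ln b − m·ln m. -/
lemma aux_pointA {a b : ℝ} (ha : 0 < a) (hb : 0 < b) :
    ((a+b)/2) * Real.log (2*((a+b)/2) / ((a+b)/2 + Real.sqrt (a*b))) ≤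
      a/2 * Real.log a + b/2 * Real.log b - ((a+b)/2) * Real.log ((a+b)/2) := by
  set m : ℝ := (a+b)/2 with hm_def
  set s : ℝ := Real.sqrt (a*b) with hs_def
  set r : ℝ := Real.sqrt a + Real.sqrt b with hr_def
  have hm : 0 < m := by positivity
  have hs : 0 ≤ s := Real.sqrt_nonneg _
  have hra : 0 < Real.sqrt a := Real.sqrt_pos.mpr ha
  have hrb : 0 < Real.sqrt b := Real.sqrt_pos.mpr hb
  have hr : 0 < r := by positivity
  have hr2 : r^2 = 2*(m+s) := by
    have h1 : Real.sqrt a * Real.sqrt b = s := (Real.sqrt_mul ha.le b).symm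
    have h2 : Real.sqrt a ^ 2 = a := Real.sq_sqrt ha.le
    have h3 : Real.sqrt b ^ 2 = b := Real.sq_sqrt hb.le
    rw [hr_def, add_sq, h2, h3, hm_def]
    nlinarith [h1]
  have hms : 0 < m + s := by linarith
  have hlogr : 2 * Real.log r = Real.log 2 + Real.log (m+s) := by
    have h1 : Real.log (r^2) = 2 * Real.log r := by
      rw [Real.log_pow]; norm_num
    rw [← h1, hr2, Real.log_mul (by norm_num) (ne_of_gt hms)]
  have hsum : a/(2*m) + b/(2*m) = 1 := by field_simp [hm_def]; linarith [hm_def]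
  have hgeom := Real.geom_mean_le_arith_mean2_weighted
    (by positivity : (0:ℝ) ≤ a/(2*m)) (by positivity : (0:ℝ) ≤ b/(2*m))
    (by positivity : (0:ℝ) ≤ (Real.sqrt a)⁻¹) (by positivity : (0:ℝ) ≤ (Real.sqrt b)⁻¹)
    hsum
  have hrhs : a/(2*m) * (Real.sqrt a)⁻¹ + b/(2*m) * (Real.sqrt b)⁻¹ = r/(2*m) := by
    have h2 : Real.sqrt a * Real.sqrt a = a := Real.mul_self_sqrt ha.le
    have h3 : Real.sqrt b * Real.sqrt b = b := Real.mul_self_sqrt hb.le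
    have e1 : a/(2*m) * (Real.sqrt a)⁻¹ = Real.sqrt a/(2*m) := by
      rw [div_mul_eq_mul_div]; nth_rewrite 1 [← h2]; field_simp
    have e2 : b/(2*m) * (Real.sqrt b)⁻¹ = Real.sqrt b/(2*m) := by
      rw [div_mul_eq_mul_div]; nth_rewrite 1 [← h3]; field_simp
    rw [e1, e2, ← add_div, hr_def]
  rw [hrhs] at hgeom
  have hlhs_pos : 0 < (Real.sqrt a)⁻¹ ^ (a/(2*m)) * (Real.sqrt b)⁻¹ ^ (b/(2*m)) := by
    have := Real.rpow_pos_of_pos (inv_pos.mpr hra) (a/(2*m))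
    have := Real.rpow_pos_of_pos (inv_pos.mpr hrb) (b/(2*m))
    positivity
  have hloggeom := Real.log_le_log hlhs_pos hgeom
  rw [Real.log_mul (ne_of_gt (Real.rpow_pos_of_pos (inv_pos.mpr hra) _))
      (ne_of_gt (Real.rpow_pos_of_pos (inv_pos.mpr hrb) _)),
    Real.log_rpow (inv_pos.mpr hra), Real.log_rpow (inv_pos.mpr hrb),
    Real.log_inv, Real.log_inv, Real.log_sqrt ha.le, Real.log_sqrt hb.le,
    Real.log_div (ne_of_gt hr) (by positivity),
    Real.log_mul (by norm_num) (ne_of_gt hm)] at hloggeom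
  have key : 2*m*Real.log 2 + 4*m*Real.log m - 2*m*Real.log (m+s) ≤
      a*Real.log a + b*Real.log b := by
    have h4 : 4*m*Real.log r = 2*m*Real.log 2 + 2*m*Real.log (m+s) := by
      rw [show 4*m*Real.log r = 2*m*(2*Real.log r) by ring, hlogr]; ring
    have h5 := mul_le_mul_of_nonneg_left hloggeom (by positivity : (0:ℝ) ≤ 4*m)
    have h6 : (4*m) * (a/(2*m) * -(Real.log a / 2) + b/(2*m) * -(Real.log b / 2)) =
        -(a*Real.log a) - b*Real.log b := by
      field_simp
      ring
    rw [h6] at h5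
    nlinarith [h5, h4]
  have hfin : Real.log (2*m/(m+s)) = Real.log 2 + Real.log m - Real.log (m+s) := by
    rw [Real.log_div (by positivity) (ne_of_gt hms), Real.log_mul (by norm_num) (ne_of_gt hm)]
  rw [hfin]
  nlinarith [key]

lemma aux_sum_sqrt_binom (L : ℕ) {p0 p1 : ℝ} (h0 : 0 < p0) (h01 : p0 < p1) (h1 : p1 < 1) :
    ∑ k ∈ Finset.range (L+1), Real.sqrt (binomPmf L p0 k * binomPmf L p1 k) =
      (Real.sqrt (p0*p1) + Real.sqrt ((1-p0)*(1-p1)))^L := by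
  have hx : (0:ℝ) ≤ p0 * p1 := by nlinarith
  have hy : (0:ℝ) ≤ (1-p0)*(1-p1) := by nlinarith
  have hterm : ∀ k, Real.sqrt (binomPmf L p0 k * binomPmf L p1 k) =
      Real.sqrt (p0*p1) ^ k * Real.sqrt ((1-p0)*(1-p1)) ^ (L-k) * (Nat.choose L k : ℝ) := by
    intro k
    have h2 : binomPmf L p0 k * binomPmf L p1 k =
        ((Nat.choose L k : ℝ))^2 * ((p0*p1)^k * (((1-p0)*(1-p1))^(L-k))) := by
      unfold binomPmf; rw [mul_pow, mul_pow]; ring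
    rw [h2, Real.sqrt_mul (by positivity), Real.sqrt_sq (Nat.cast_nonneg _),
      Real.sqrt_mul (by positivity), aux_sqrt_pow _ hx, aux_sqrt_pow _ hy]
    ring
  rw [add_pow]
  exact Finset.sum_congr rfl (fun k _ => hterm k)

lemma aux_mutInfo_half_eq (L : ℕ) (p0 p1 : ℝ) :
    mutInfo L p0 p1 (1/2) = ∑ k ∈ Finset.range (L+1),
      (binomPmf L p1 k/2 * Real.log (binomPmf L p1 k)
        + binomPmf L p0 k/2 * Real.log (binomPmf L p0 k)
        - ((binomPmf L p1 k + binomPmf L p0 k)/2)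
            * Real.log ((binomPmf L p1 k + binomPmf L p0 k)/2)) := by
  have hmix : ∀ k, (1/2:ℝ) * binomPmf L p1 k + (1-1/2) * binomPmf L p0 k
      = (binomPmf L p1 k + binomPmf L p0 k)/2 := fun k => by ring
  simp only [mutInfo, entropyOn, hmix]
  rw [Finset.sum_sub_distrib, Finset.sum_add_distrib]
  have h1 : ∑ k ∈ Finset.range (L+1), binomPmf L p1 k/2 * Real.log (binomPmf L p1 k)
      = (1/2) * ∑ k ∈ Finset.range (L+1), binomPmf L p1 k * Real.log (binomPmf L p1 k) := by
    rw [Finset.mul_sum]; exact Finset.sum_congr rfl (fun k _ => by ring)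
  have h0 : ∑ k ∈ Finset.range (L+1), binomPmf L p0 k/2 * Real.log (binomPmf L p0 k)
      = (1/2) * ∑ k ∈ Finset.range (L+1), binomPmf L p0 k * Real.log (binomPmf L p0 k) := by
    rw [Finset.mul_sum]; exact Finset.sum_congr rfl (fun k _ => by ring)
  rw [h1, h0]; ring

/-- with β = (√(p0·p1) + √((1−p0)·(1−p1)))^L,
sup_{μ∈[0,1]} I(μ) ≥ −ln((1+β)/2). -/
theorem mutInfo_sup_lower_bound (p0 p1 : ℝ) (L : ℕ)
    (hp0 : 0 < p0) (hp01 : p0 < p1) (hp1 : p1 < 1) (hL : 1 ≤ L)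
    (β : ℝ) (hβ : β = (Real.sqrt (p0 * p1) + Real.sqrt ((1 - p0) * (1 - p1))) ^ L) :
    -Real.log ((1 + β) / 2) ≤ ⨆ μ : Set.Icc (0:ℝ) 1, mutInfo L p0 p1 μ := by
  have hp1pos : 0 < p1 := lt_trans hp0 hp01
  have hp0lt1 : p0 < 1 := lt_trans hp01 hp1
  -- notation
  set q0 : ℕ → ℝ := binomPmf L p0 with hq0_def
  set q1 : ℕ → ℝ := binomPmf L p1 with hq1_def
  have hq0pos : ∀ k ∈ Finset.range (L+1), 0 < q0 k :=
    fun k hk => aux_binom_pos L p0 hp0 hp0lt1 hk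
  have hq1pos : ∀ k ∈ Finset.range (L+1), 0 < q1 k :=
    fun k hk => aux_binom_pos L p1 hp1pos hp1 hk
  set M : ℕ → ℝ := fun k => (q1 k + q0 k)/2 with hM_def
  set T : ℕ → ℝ := fun k => Real.sqrt (q1 k * q0 k) with hT_def
  set X : ℕ → ℝ := fun k => (M k + T k)/(2 * M k) with hX_def
  have hMpos : ∀ k ∈ Finset.range (L+1), 0 < M k := by
    intro k hk
    have := hq0pos k hk; have := hq1pos k hk
    simp only [hM_def]; positivity
  have hTnonneg : ∀ k, 0 ≤ T k := fun k => Real.sqrt_nonneg _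
  have hXpos : ∀ k ∈ Finset.range (L+1), 0 < X k := by
    intro k hk
    have h1 := hMpos k hk; have h2 := hTnonneg k
    simp only [hX_def]; positivity
  -- sums
  have hMsum : ∑ k ∈ Finset.range (L+1), M k = 1 := by
    simp only [hM_def]
    rw [show (∑ k ∈ Finset.range (L+1), (q1 k + q0 k)/2)
        = ((∑ k ∈ Finset.range (L+1), q1 k) + ∑ k ∈ Finset.range (L+1), q0 k)/2 by
      rw [← Finset.sum_add_distrib, Finset.sum_div]]
    rw [hq0_def, hq1_def, aux_sum_binom, aux_sum_binom]; norm_num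
  have hTsum : ∑ k ∈ Finset.range (L+1), T k = β := by
    simp only [hT_def]
    rw [hβ, ← aux_sum_sqrt_binom L hp0 hp01 hp1]
    exact Finset.sum_congr rfl (fun k _ => by rw [hq0_def, hq1_def, mul_comm])
  -- Jensen step
  have hconc : ConcaveOn ℝ (Set.Ioi (0:ℝ)) Real.log := strictConcaveOn_log_Ioi.concaveOn
  have hjensen := hconc.le_map_sum (t := Finset.range (L+1)) (w := M) (p := X)
    (fun k hk => (hMpos k hk).le) hMsum (fun k hk => hXpos k hk)
  have hMX : ∑ k ∈ Finset.range (L+1), M k • X k = (1 + β)/2 := by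
    have hterm : ∀ k ∈ Finset.range (L+1), M k • X k = (M k + T k)/2 := by
      intro k hk
      have h1 := (hMpos k hk).ne'
      simp only [smul_eq_mul, hX_def]
      field_simp
    rw [Finset.sum_congr rfl hterm,
      show (∑ k ∈ Finset.range (L+1), (M k + T k)/2)
        = ((∑ k ∈ Finset.range (L+1), M k) + ∑ k ∈ Finset.range (L+1), T k)/2 by
      rw [← Finset.sum_add_distrib, Finset.sum_div], hMsum, hTsum]
  rw [hMX] at hjensen
  -- pointwise step: mutInfo at 1/2 dominates ∑ M k * log (X k)⁻¹
  have hpoint : ∀ k ∈ Finset.range (L+1),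
      -(M k * Real.log (X k)) ≤
        q1 k/2 * Real.log (q1 k) + q0 k/2 * Real.log (q0 k) - M k * Real.log (M k) := by
    intro k hk
    have hA := aux_pointA (hq1pos k hk) (hq0pos k hk)
    have hMk := hMpos k hk
    have hMTk : 0 < M k + T k := by have := hTnonneg k; linarith
    have hXinv : 2 * M k / (M k + T k) = (X k)⁻¹ := by
      simp only [hX_def]
      rw [inv_div]
    have hlogX : Real.log (2 * ((q1 k + q0 k)/2) / ((q1 k + q0 k)/2 + Real.sqrt (q1 k * q0 k)))
        = -Real.log (X k) := by
      rw [show (q1 k + q0 k)/2 = M k from rfl,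
        show Real.sqrt (q1 k * q0 k) = T k from rfl, hXinv, Real.log_inv]
    rw [hlogX] at hA
    calc -(M k * Real.log (X k)) = M k * -Real.log (X k) := by ring
      _ ≤ _ := hA
  have hhalf : -Real.log ((1 + β)/2) ≤ mutInfo L p0 p1 (1/2) := by
    rw [aux_mutInfo_half_eq]
    calc -Real.log ((1 + β)/2)
        ≤ -∑ k ∈ Finset.range (L+1), M k • Real.log (X k) := by linarith [hjensen]
      _ = ∑ k ∈ Finset.range (L+1), -(M k * Real.log (X k)) := by
          rw [← Finset.sum_neg_distrib]
          exact Finset.sum_congr rfl (fun k _ => by rw [smul_eq_mul])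
      _ ≤ _ := Finset.sum_le_sum hpoint
  -- bounded above
  have hbdd : BddAbove (Set.range fun μ : Set.Icc (0:ℝ) 1 => mutInfo L p0 p1 μ) := by
    refine ⟨(L+1 : ℝ), ?_⟩
    rintro x ⟨⟨μ, hμ0, hμ1⟩, rfl⟩
    have hH1 : 0 ≤ entropyOn L (binomPmf L p1) :=
      aux_entropy_nonneg L _ (fun k hk =>
        ⟨aux_binom_nonneg L p1 hp1pos.le hp1.le k, aux_binom_le_one L p1 hp1pos.le hp1.le hk⟩)
    have hH0 : 0 ≤ entropyOn L (binomPmf L p0) :=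
      aux_entropy_nonneg L _ (fun k hk =>
        ⟨aux_binom_nonneg L p0 hp0.le hp0lt1.le k, aux_binom_le_one L p0 hp0.le hp0lt1.le hk⟩)
    have hmixbd : ∀ k ∈ Finset.range (L+1),
        0 ≤ μ * binomPmf L p1 k + (1-μ) * binomPmf L p0 k ∧
        μ * binomPmf L p1 k + (1-μ) * binomPmf L p0 k ≤ 1 := by
      intro k hk
      have h1 := aux_binom_nonneg L p1 hp1pos.le hp1.le k
      have h2 := aux_binom_nonneg L p0 hp0.le hp0lt1.le k
      have h3 := aux_binom_le_one L p1 hp1pos.le hp1.le hk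
      have h4 := aux_binom_le_one L p0 hp0.le hp0lt1.le hk
      constructor
      · have := mul_nonneg hμ0 h1
        have := mul_nonneg (by linarith : (0:ℝ) ≤ 1-μ) h2
        linarith
      · nlinarith
    have hHmix : entropyOn L (fun k => μ * binomPmf L p1 k + (1-μ) * binomPmf L p0 k)
        ≤ (L+1 : ℝ) := by
      unfold entropyOn
      rw [← Finset.sum_neg_distrib]
      calc ∑ k ∈ Finset.range (L+1),
            -((μ * binomPmf L p1 k + (1-μ) * binomPmf L p0 k) *
              Real.log (μ * binomPmf L p1 k + (1-μ) * binomPmf L p0 k))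
          ≤ ∑ _k ∈ Finset.range (L+1), (1:ℝ) := by
            apply Finset.sum_le_sum
            intro k hk
            obtain ⟨ha, hb⟩ := hmixbd k hk
            exact aux_neg_xlogx_le_one ha hb
        _ = (L+1 : ℝ) := by
            rw [Finset.sum_const, Finset.card_range]; simp
    have hI : mutInfo L p0 p1 μ ≤ (L+1 : ℝ) := by
      unfold mutInfo
      have h1 : 0 ≤ μ * entropyOn L (binomPmf L p1) := mul_nonneg hμ0 hH1
      have h2 : 0 ≤ (1-μ) * entropyOn L (binomPmf L p0) :=
        mul_nonneg (by linarith) hH0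
      linarith [hHmix]
    exact hI
  exact le_trans hhalf (le_ciSup hbdd ⟨1/2, by norm_num, by norm_num⟩)
end

section
/- Let 0 < p0 < p1 < 1 and integer L ≥ 1, and set β1 = ((p0/p1)^{p1}·((1−p0)/(1−p1))^{1−p1})^L and β2 = ((p1/p0)^{p0}·((1−p1)/(1−p0))^{1−p0})^L. Then the maximum over priors μ ∈ [0,1] of the mutual information I(μ) of the binary-input channel whose output is Bin(L,p1) with probability μ and Bin(L,p0) with probability 1−μ satisfies sup_{μ∈[0,1]} I(μ) ≤ |β1−β2|·(1−min{β1,β2})/(1−β1·β2) − ln((1−β1·β2)/(2−β1−β2)). -/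
lemma binom_sum (n : ℕ) (p : ℝ) :
    ∑ k ∈ Finset.range (n + 1), (n.choose k : ℝ) * p ^ k * (1 - p) ^ (n - k) = 1 := by
  have h := (add_pow p (1 - p) n).symm
  calc ∑ k ∈ Finset.range (n + 1), (n.choose k : ℝ) * p ^ k * (1 - p) ^ (n - k)
      = ∑ k ∈ Finset.range (n + 1), p ^ k * (1 - p) ^ (n - k) * (n.choose k : ℝ) := by
        apply Finset.sum_congr rfl; intro k _; ring
    _ = (p + (1 - p)) ^ n := h
    _ = 1 := by norm_num

lemma binom_mean (n : ℕ) (p : ℝ) :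
    ∑ k ∈ Finset.range (n + 1 + 1),
      (k : ℝ) * ((Nat.choose (n+1) k : ℝ) * p ^ k * (1 - p) ^ (n + 1 - k)) = ((n:ℝ) + 1) * p := by
  rw [Finset.sum_range_succ']
  have step : ∀ j ∈ Finset.range (n+1),
      ((j+1 : ℕ) : ℝ) * ((Nat.choose (n+1) (j+1) : ℝ) * p ^ (j+1) * (1 - p) ^ (n + 1 - (j+1)))
        = ((n:ℝ)+1) * p * ((Nat.choose n j : ℝ) * p ^ j * (1 - p) ^ (n - j)) := by
    intro j _
    have hc : ((n+1) * Nat.choose n j : ℕ) = (Nat.choose (n+1) (j+1) * (j+1) : ℕ) :=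
      Nat.add_one_mul_choose_eq n j
    have hc' : ((n:ℝ)+1) * (Nat.choose n j : ℝ) = (Nat.choose (n+1) (j+1) : ℝ) * ((j:ℝ)+1) := by
      exact_mod_cast hc
    have hsub : n + 1 - (j + 1) = n - j := by omega
    rw [hsub, pow_succ]
    push_cast
    linear_combination (-(p ^ j * p * (1 - p) ^ (n - j))) * hc'
  rw [Finset.sum_congr rfl step]
  rw [← Finset.mul_sum, binom_sum n p]
  simp

lemma binomPmf_sum (L : ℕ) (p : ℝ) :
    ∑ k ∈ Finset.range (L + 1), binomPmf L p k = 1 := by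
  simp only [binomPmf]
  exact binom_sum L p

lemma binomPmf_mean (L : ℕ) (hL : 1 ≤ L) (p : ℝ) :
    ∑ k ∈ Finset.range (L + 1), (k : ℝ) * binomPmf L p k = (L : ℝ) * p := by
  obtain ⟨n, rfl⟩ : ∃ n, L = n + 1 := ⟨L - 1, by omega⟩
  simp only [binomPmf]
  rw [show (((n+1 : ℕ)):ℝ) = (n:ℝ) + 1 by push_cast; ring]
  exact binom_mean n p

lemma binomPmf_pos {L k : ℕ} {p : ℝ} (h0 : 0 < p) (h1 : p < 1)
    (hk : k ∈ Finset.range (L + 1)) : 0 < binomPmf L p k := by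
  have hkL : k ≤ L := Nat.lt_succ_iff.1 (Finset.mem_range.1 hk)
  unfold binomPmf
  have hC : (0:ℝ) < (Nat.choose L k : ℝ) := Nat.cast_pos.2 (Nat.choose_pos hkL)
  exact mul_pos (mul_pos hC (pow_pos h0 k)) (pow_pos (by linarith) (L - k))

lemma amgm (s : Finset ℕ) (w x : ℕ → ℝ) (hw : ∀ k ∈ s, 0 ≤ w k) (hx : ∀ k ∈ s, 0 < x k)
    (hsum : ∑ k ∈ s, w k = 1) :
    ∑ k ∈ s, w k * Real.log (x k) ≤ Real.log (∑ k ∈ s, w k * x k) := by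
  set S := ∑ k ∈ s, w k * x k with hSdef
  have hex : ∃ k ∈ s, 0 < w k := by
    by_contra h
    push_neg at h
    have : ∑ k ∈ s, w k = 0 := Finset.sum_eq_zero fun k hk => le_antisymm (h k hk) (hw k hk)
    rw [this] at hsum; norm_num at hsum
  obtain ⟨k0, hk0, hwk0⟩ := hex
  have hS : 0 < S := by
    refine lt_of_lt_of_le (mul_pos hwk0 (hx k0 hk0)) ?_
    exact Finset.single_le_sum (fun i hi => mul_nonneg (hw i hi) (hx i hi).le) hk0
  have key : ∀ k ∈ s, w k * Real.log (x k) - w k * Real.log S ≤ w k * x k / S - w k := by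
    intro k hk
    have h := Real.log_le_sub_one_of_pos (div_pos (hx k hk) hS)
    rw [Real.log_div (hx k hk).ne' hS.ne'] at h
    have h2 := mul_le_mul_of_nonneg_left h (hw k hk)
    have e1 : w k * (Real.log (x k) - Real.log S) = w k * Real.log (x k) - w k * Real.log S := by
      ring
    have e2 : w k * (x k / S - 1) = w k * x k / S - w k := by ring
    linarith [e1 ▸ e2 ▸ h2]
  have hsumle := Finset.sum_le_sum key
  rw [Finset.sum_sub_distrib, Finset.sum_sub_distrib, ← Finset.sum_mul, hsum] at hsumle
  have hdiv : ∑ k ∈ s, w k * x k / S = 1 := by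
    rw [← Finset.sum_div, ← hSdef, div_self hS.ne']
  rw [hdiv] at hsumle
  linarith

lemma amgm_exp (s : Finset ℕ) (w x : ℕ → ℝ) (hw : ∀ k ∈ s, 0 ≤ w k) (hx : ∀ k ∈ s, 0 < x k)
    (hsum : ∑ k ∈ s, w k = 1) :
    Real.exp (∑ k ∈ s, w k * Real.log (x k)) ≤ ∑ k ∈ s, w k * x k := by
  have hex : ∃ k ∈ s, 0 < w k := by
    by_contra h
    push_neg at h
    have : ∑ k ∈ s, w k = 0 := Finset.sum_eq_zero fun k hk => le_antisymm (h k hk) (hw k hk)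
    rw [this] at hsum; norm_num at hsum
  obtain ⟨k0, hk0, hwk0⟩ := hex
  have hS : 0 < ∑ k ∈ s, w k * x k := by
    refine lt_of_lt_of_le (mul_pos hwk0 (hx k0 hk0)) ?_
    exact Finset.single_le_sum (fun i hi => mul_nonneg (hw i hi) (hx i hi).le) hk0
  calc Real.exp (∑ k ∈ s, w k * Real.log (x k)) ≤ Real.exp (Real.log (∑ k ∈ s, w k * x k)) :=
        Real.exp_le_exp.2 (amgm s w x hw hx hsum)
    _ = _ := Real.exp_log hS

lemma geom_mix (s : Finset ℕ) (w r : ℕ → ℝ) (hw : ∀ k ∈ s, 0 ≤ w k) (hr : ∀ k ∈ s, 0 < r k)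
    (hsum : ∑ k ∈ s, w k = 1) {μ : ℝ} (h0 : 0 ≤ μ) (h1 : μ ≤ 1) :
    Real.log (μ + (1 - μ) * Real.exp (∑ k ∈ s, w k * Real.log (r k))) ≤
      ∑ k ∈ s, w k * Real.log (μ + (1 - μ) * r k) := by
  have ht : ∀ k ∈ s, 0 < μ + (1 - μ) * r k := by
    intro k hk
    rcases eq_or_lt_of_le h0 with h | h
    · rw [← h]; simpa using hr k hk
    · have := mul_nonneg (by linarith : (0:ℝ) ≤ 1 - μ) (hr k hk).le
      linarith
  set S := ∑ k ∈ s, w k * Real.log (μ + (1 - μ) * r k) with hSdef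
  set β := Real.exp (∑ k ∈ s, w k * Real.log (r k)) with hβdef
  have hβ : 0 < β := Real.exp_pos _
  have hG : 0 < Real.exp S := Real.exp_pos _
  have step1 : μ / Real.exp S ≤ ∑ k ∈ s, w k * (μ / (μ + (1 - μ) * r k)) := by
    rcases eq_or_lt_of_le h0 with h | h
    · rw [← h]
      simp
    · have hx : ∀ k ∈ s, 0 < μ / (μ + (1 - μ) * r k) := fun k hk => div_pos h (ht k hk)
      have := amgm_exp s w _ hw hx hsum
      have hlogeq : ∑ k ∈ s, w k * Real.log (μ / (μ + (1 - μ) * r k)) = Real.log μ - S := by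
        have hterm : ∀ k ∈ s, w k * Real.log (μ / (μ + (1 - μ) * r k)) =
            w k * Real.log μ - w k * Real.log (μ + (1 - μ) * r k) := by
          intro k hk
          rw [Real.log_div h.ne' (ht k hk).ne']
          ring
        rw [Finset.sum_congr rfl hterm, Finset.sum_sub_distrib, ← Finset.sum_mul, hsum, one_mul,
          hSdef]
      rw [hlogeq] at this
      rw [Real.exp_sub, Real.exp_log h] at this
      exact this
  have step2 : (1 - μ) * β / Real.exp S ≤
      ∑ k ∈ s, w k * ((1 - μ) * r k / (μ + (1 - μ) * r k)) := by
    rcases eq_or_lt_of_le h1 with h | h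
    · rw [h]
      simp
    · have h1μ : 0 < 1 - μ := by linarith
      have hx : ∀ k ∈ s, 0 < (1 - μ) * r k / (μ + (1 - μ) * r k) := fun k hk =>
        div_pos (mul_pos h1μ (hr k hk)) (ht k hk)
      have := amgm_exp s w _ hw hx hsum
      have hlogeq : ∑ k ∈ s, w k * Real.log ((1 - μ) * r k / (μ + (1 - μ) * r k)) =
          Real.log (1 - μ) + (∑ k ∈ s, w k * Real.log (r k)) - S := by
        have hterm : ∀ k ∈ s, w k * Real.log ((1 - μ) * r k / (μ + (1 - μ) * r k)) =
            (w k * Real.log (1 - μ) + w k * Real.log (r k)) -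
              w k * Real.log (μ + (1 - μ) * r k) := by
          intro k hk
          rw [Real.log_div (mul_ne_zero h1μ.ne' (hr k hk).ne') (ht k hk).ne',
            Real.log_mul h1μ.ne' (hr k hk).ne']
          ring
        rw [Finset.sum_congr rfl hterm, Finset.sum_sub_distrib, Finset.sum_add_distrib,
          ← Finset.sum_mul, hsum, one_mul, hSdef]
      rw [hlogeq] at this
      rw [Real.exp_sub, Real.exp_add, Real.exp_log h1μ, ← hβdef] at this
      exact this
  have step3 : ∑ k ∈ s, w k * (μ / (μ + (1 - μ) * r k)) +
      ∑ k ∈ s, w k * ((1 - μ) * r k / (μ + (1 - μ) * r k)) = 1 := by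
    rw [← Finset.sum_add_distrib]
    have hterm : ∀ k ∈ s, w k * (μ / (μ + (1 - μ) * r k)) +
        w k * ((1 - μ) * r k / (μ + (1 - μ) * r k)) = w k := by
      intro k hk
      have hne := (ht k hk).ne'
      field_simp
    rw [Finset.sum_congr rfl hterm, hsum]
  have hmix : 0 < μ + (1 - μ) * β := by
    rcases eq_or_lt_of_le h0 with h | h
    · rw [← h]; simpa using hβ
    · have := mul_nonneg (by linarith : (0:ℝ) ≤ 1 - μ) hβ.le
      linarith
  have hdivle : (μ + (1 - μ) * β) / Real.exp S ≤ 1 := by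
    rw [add_div]
    linarith [step1, step2, step3]
  have hle : μ + (1 - μ) * β ≤ Real.exp S := (div_le_one hG).1 hdivle
  calc Real.log (μ + (1 - μ) * β) ≤ Real.log (Real.exp S) := Real.log_le_log hmix hle
    _ = S := Real.log_exp S

lemma final_alg (b1 b2 μ : ℝ) (hb1 : 0 < b1) (hb1' : b1 < 1) (hb2 : 0 < b2) (hb2' : b2 < 1)
    (hμ0 : 0 ≤ μ) (hμ1 : μ ≤ 1) :
    -(μ * Real.log (μ + (1 - μ) * b1)) - (1 - μ) * Real.log (1 - μ + μ * b2) ≤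
      |b1 - b2| * (1 - min b1 b2) / (1 - b1 * b2) -
        Real.log ((1 - b1 * b2) / (2 - b1 - b2)) := by
  have hA : 0 < μ + (1 - μ) * b1 := by nlinarith
  have hB : 0 < 1 - μ + μ * b2 := by nlinarith
  have hU : 0 < 1 - b1 * b2 := by nlinarith
  have hT : 0 < 2 - b1 - b2 := by nlinarith
  have hC : 0 < (1 - b1 * b2) / (2 - b1 - b2) := div_pos hU hT
  have h1 : Real.log ((1 - b1 * b2) / (2 - b1 - b2)) - Real.log (μ + (1 - μ) * b1) ≤
      (1 - b1 * b2) / (2 - b1 - b2) / (μ + (1 - μ) * b1) - 1 := by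
    have h := Real.log_le_sub_one_of_pos (div_pos hC hA)
    rwa [Real.log_div hC.ne' hA.ne'] at h
  have h2 : Real.log ((1 - b1 * b2) / (2 - b1 - b2)) - Real.log (1 - μ + μ * b2) ≤
      (1 - b1 * b2) / (2 - b1 - b2) / (1 - μ + μ * b2) - 1 := by
    have h := Real.log_le_sub_one_of_pos (div_pos hC hB)
    rwa [Real.log_div hC.ne' hB.ne'] at h
  have key1 : μ * (1 - b1 * b2) ^ 2 ≤ (μ + (1 - μ) * b1) *
      ((1 - b1) * (1 - b1 * b2) + b1 * (2 - b1 - b2) * ((2 - b1 - b2) * μ - (1 - b1))) := by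
    nlinarith [mul_nonneg (mul_nonneg hb1.le (by linarith : (0:ℝ) ≤ 1 - b1))
      (sq_nonneg ((2 - b1 - b2) * μ - (1 - b1)))]
  have key2 : (1 - μ) * (1 - b1 * b2) ^ 2 ≤ (1 - μ + μ * b2) *
      ((1 - b2) * (1 - b1 * b2) + b2 * (2 - b1 - b2) * (-((2 - b1 - b2) * μ - (1 - b1)))) := by
    nlinarith [mul_nonneg (mul_nonneg hb2.le (by linarith : (0:ℝ) ≤ 1 - b2))
      (sq_nonneg ((2 - b1 - b2) * μ - (1 - b1)))]
  have hfA : (1 - b1 * b2) / (2 - b1 - b2) * (μ / (μ + (1 - μ) * b1)) ≤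
      (1 - b1) / (2 - b1 - b2) + b1 * ((2 - b1 - b2) * μ - (1 - b1)) / (1 - b1 * b2) := by
    rw [div_mul_div_comm, div_add_div _ _ hT.ne' hU.ne',
      div_le_div_iff₀ (by positivity) (by positivity)]
    nlinarith [mul_le_mul_of_nonneg_left key1 hT.le]
  have hfB : (1 - b1 * b2) / (2 - b1 - b2) * ((1 - μ) / (1 - μ + μ * b2)) ≤
      (1 - b2) / (2 - b1 - b2) + b2 * (-((2 - b1 - b2) * μ - (1 - b1))) / (1 - b1 * b2) := by
    rw [div_mul_div_comm, div_add_div _ _ hT.ne' hU.ne',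
      div_le_div_iff₀ (by positivity) (by positivity)]
    nlinarith [mul_le_mul_of_nonneg_left key2 hT.le]
  have he : (1 - b1) / (2 - b1 - b2) + b1 * ((2 - b1 - b2) * μ - (1 - b1)) / (1 - b1 * b2) +
      ((1 - b2) / (2 - b1 - b2) + b2 * (-((2 - b1 - b2) * μ - (1 - b1))) / (1 - b1 * b2)) =
      1 + (b1 - b2) * ((2 - b1 - b2) * μ - (1 - b1)) / (1 - b1 * b2) := by
    field_simp
    ring
  have habs : |(2 - b1 - b2) * μ - (1 - b1)| ≤ 1 - min b1 b2 := by
    rw [abs_le]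
    constructor
    · have h3 : 0 ≤ (2 - b1 - b2) * μ := mul_nonneg hT.le hμ0
      have h4 : min b1 b2 ≤ b1 := min_le_left _ _
      linarith
    · have h3 : (2 - b1 - b2) * μ ≤ 2 - b1 - b2 := mul_le_of_le_one_right hT.le hμ1
      have h4 : min b1 b2 ≤ b2 := min_le_right _ _
      linarith
  have hnum : (b1 - b2) * ((2 - b1 - b2) * μ - (1 - b1)) ≤ |b1 - b2| * (1 - min b1 b2) :=
    calc (b1 - b2) * ((2 - b1 - b2) * μ - (1 - b1)) ≤
        |(b1 - b2) * ((2 - b1 - b2) * μ - (1 - b1))| := le_abs_self _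
      _ = |b1 - b2| * |(2 - b1 - b2) * μ - (1 - b1)| := abs_mul _ _
      _ ≤ |b1 - b2| * (1 - min b1 b2) := mul_le_mul_of_nonneg_left habs (abs_nonneg _)
  have hD : (b1 - b2) * ((2 - b1 - b2) * μ - (1 - b1)) / (1 - b1 * b2) ≤
      |b1 - b2| * (1 - min b1 b2) / (1 - b1 * b2) := by gcongr
  have m1 := mul_le_mul_of_nonneg_left h1 hμ0
  have m2 := mul_le_mul_of_nonneg_left h2 (by linarith : (0:ℝ) ≤ 1 - μ)
  have e1 : μ * ((1 - b1 * b2) / (2 - b1 - b2) / (μ + (1 - μ) * b1) - 1) =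
      (1 - b1 * b2) / (2 - b1 - b2) * (μ / (μ + (1 - μ) * b1)) - μ := by ring
  have e2 : (1 - μ) * ((1 - b1 * b2) / (2 - b1 - b2) / (1 - μ + μ * b2) - 1) =
      (1 - b1 * b2) / (2 - b1 - b2) * ((1 - μ) / (1 - μ + μ * b2)) - (1 - μ) := by ring
  have e3 : μ * (Real.log ((1 - b1 * b2) / (2 - b1 - b2)) - Real.log (μ + (1 - μ) * b1)) =
      μ * Real.log ((1 - b1 * b2) / (2 - b1 - b2)) - μ * Real.log (μ + (1 - μ) * b1) := by ring
  have e4 : (1 - μ) * (Real.log ((1 - b1 * b2) / (2 - b1 - b2)) - Real.log (1 - μ + μ * b2)) =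
      (1 - μ) * Real.log ((1 - b1 * b2) / (2 - b1 - b2)) -
        (1 - μ) * Real.log (1 - μ + μ * b2) := by ring
  have e5 : μ * Real.log ((1 - b1 * b2) / (2 - b1 - b2)) +
      (1 - μ) * Real.log ((1 - b1 * b2) / (2 - b1 - b2)) =
      Real.log ((1 - b1 * b2) / (2 - b1 - b2)) := by ring
  linarith [m1, m2, e1, e2, e3, e4, e5, hfA, hfB, he, hD]

lemma lograt (L : ℕ) {a b : ℝ} (ha0 : 0 < a) (ha1 : a < 1) (hb0 : 0 < b) (hb1 : b < 1)
    {k : ℕ} (hk : k ∈ Finset.range (L + 1)) :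
    Real.log (binomPmf L a k / binomPmf L b k) =
      (k : ℝ) * Real.log (a / b) + ((L : ℝ) - (k : ℝ)) * Real.log ((1 - a) / (1 - b)) := by
  have hkL : k ≤ L := Nat.lt_succ_iff.1 (Finset.mem_range.1 hk)
  have hC : (0:ℝ) < (Nat.choose L k : ℝ) := Nat.cast_pos.2 (Nat.choose_pos hkL)
  have hb' : (0:ℝ) < 1 - b := by linarith
  have ha' : (0:ℝ) < 1 - a := by linarith
  have hr : binomPmf L a k / binomPmf L b k = (a / b) ^ k * ((1 - a) / (1 - b)) ^ (L - k) := by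
    unfold binomPmf
    rw [div_pow, div_pow]
    field_simp
  rw [hr, Real.log_mul (pow_ne_zero _ (div_pos ha0 hb0).ne')
    (pow_ne_zero _ (div_pos ha' hb').ne'), Real.log_pow, Real.log_pow, Nat.cast_sub hkL]

lemma klsum (L : ℕ) (hL : 1 ≤ L) {a b : ℝ} (ha0 : 0 < a) (ha1 : a < 1) (hb0 : 0 < b)
    (hb1 : b < 1) :
    ∑ k ∈ Finset.range (L + 1), binomPmf L b k * Real.log (binomPmf L a k / binomPmf L b k) =
      (L : ℝ) * (b * Real.log (a / b) + (1 - b) * Real.log ((1 - a) / (1 - b))) := by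
  have hterm : ∀ k ∈ Finset.range (L + 1),
      binomPmf L b k * Real.log (binomPmf L a k / binomPmf L b k) =
        ((k : ℝ) * binomPmf L b k) * Real.log (a / b) +
          (((L : ℝ) * binomPmf L b k) * Real.log ((1 - a) / (1 - b)) -
            ((k : ℝ) * binomPmf L b k) * Real.log ((1 - a) / (1 - b))) := by
    intro k hk
    rw [lograt L ha0 ha1 hb0 hb1 hk]
    ring
  rw [Finset.sum_congr rfl hterm, Finset.sum_add_distrib, Finset.sum_sub_distrib,
    ← Finset.sum_mul, ← Finset.sum_mul, ← Finset.sum_mul, ← Finset.mul_sum,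
    binomPmf_mean L hL b, binomPmf_sum L b, mul_one]
  ring

lemma beta_pos (L : ℕ) {a b : ℝ} (ha0 : 0 < a) (ha1 : a < 1) (hb0 : 0 < b) (hb1 : b < 1) :
    0 < ((a / b) ^ b * ((1 - a) / (1 - b)) ^ (1 - b)) ^ L :=
  pow_pos (mul_pos (Real.rpow_pos_of_pos (div_pos ha0 hb0) _)
    (Real.rpow_pos_of_pos (div_pos (by linarith) (by linarith)) _)) L

lemma beta_log (L : ℕ) {a b : ℝ} (ha0 : 0 < a) (ha1 : a < 1) (hb0 : 0 < b) (hb1 : b < 1) :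
    Real.log (((a / b) ^ b * ((1 - a) / (1 - b)) ^ (1 - b)) ^ L) =
      (L : ℝ) * (b * Real.log (a / b) + (1 - b) * Real.log ((1 - a) / (1 - b))) := by
  have h1 : (0:ℝ) < a / b := div_pos ha0 hb0
  have h2 : (0:ℝ) < (1 - a) / (1 - b) := div_pos (by linarith) (by linarith)
  rw [Real.log_pow, Real.log_mul (Real.rpow_pos_of_pos h1 _).ne'
    (Real.rpow_pos_of_pos h2 _).ne', Real.log_rpow h1, Real.log_rpow h2]

lemma beta_lt_one (L : ℕ) (hL : 1 ≤ L) {a b : ℝ} (ha0 : 0 < a) (ha1 : a < 1) (hb0 : 0 < b)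
    (hb1 : b < 1) (hab : a ≠ b) :
    ((a / b) ^ b * ((1 - a) / (1 - b)) ^ (1 - b)) ^ L < 1 := by
  have h1 : (0:ℝ) < a / b := div_pos ha0 hb0
  have hb' : (0:ℝ) < 1 - b := by linarith
  have ha' : (0:ℝ) < 1 - a := by linarith
  have h2 : (0:ℝ) < (1 - a) / (1 - b) := div_pos ha' hb'
  have hne1 : a / b ≠ 1 := fun h => hab ((div_eq_one_iff_eq hb0.ne').1 h)
  have hne2 : (1 - a) / (1 - b) ≠ 1 := fun h => by
    have := (div_eq_one_iff_eq hb'.ne').1 h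
    exact hab (by linarith)
  have l1 := Real.log_lt_sub_one_of_pos h1 hne1
  have l2 := Real.log_lt_sub_one_of_pos h2 hne2
  have q1 : b * Real.log (a / b) < b * (a / b - 1) := mul_lt_mul_of_pos_left l1 hb0
  have q2 : (1 - b) * Real.log ((1 - a) / (1 - b)) < (1 - b) * ((1 - a) / (1 - b) - 1) :=
    mul_lt_mul_of_pos_left l2 hb'
  have q3 : b * (a / b - 1) + (1 - b) * ((1 - a) / (1 - b) - 1) = 0 := by
    field_simp
    ring
  have hc : b * Real.log (a / b) + (1 - b) * Real.log ((1 - a) / (1 - b)) < 0 := by linarith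
  have hL1 : (1:ℝ) ≤ (L:ℝ) := by exact_mod_cast hL
  have hlogneg : Real.log (((a / b) ^ b * ((1 - a) / (1 - b)) ^ (1 - b)) ^ L) < 0 := by
    rw [beta_log L ha0 ha1 hb0 hb1]
    nlinarith
  exact (Real.log_neg_iff (beta_pos L ha0 ha1 hb0 hb1)).1 hlogneg

lemma beta_exp (L : ℕ) (hL : 1 ≤ L) {a b : ℝ} (ha0 : 0 < a) (ha1 : a < 1) (hb0 : 0 < b)
    (hb1 : b < 1) :
    ((a / b) ^ b * ((1 - a) / (1 - b)) ^ (1 - b)) ^ L =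
      Real.exp (∑ k ∈ Finset.range (L + 1),
        binomPmf L b k * Real.log (binomPmf L a k / binomPmf L b k)) := by
  rw [klsum L hL ha0 ha1 hb0 hb1, ← beta_log L ha0 ha1 hb0 hb1,
    Real.exp_log (beta_pos L ha0 ha1 hb0 hb1)]

lemma mutInfo_le (p0 p1 : ℝ) (L : ℕ) (hp0 : 0 < p0) (hp01 : p0 < p1) (hp1 : p1 < 1)
    (hL : 1 ≤ L) (β1 β2 : ℝ)
    (hβ1 : β1 = ((p0 / p1) ^ p1 * ((1 - p0) / (1 - p1)) ^ (1 - p1)) ^ L)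
    (hβ2 : β2 = ((p1 / p0) ^ p0 * ((1 - p1) / (1 - p0)) ^ (1 - p0)) ^ L)
    {μ : ℝ} (hμ0 : 0 ≤ μ) (hμ1 : μ ≤ 1) :
    mutInfo L p0 p1 μ ≤
      -(μ * Real.log (μ + (1 - μ) * β1)) - (1 - μ) * Real.log (1 - μ + μ * β2) := by
  have hp1' : 0 < p1 := hp0.trans hp01
  have hp0' : p0 < 1 := hp01.trans hp1
  have hw : ∀ k ∈ Finset.range (L + 1), 0 < binomPmf L p1 k :=
    fun k hk => binomPmf_pos hp1' hp1 hk
  have hv : ∀ k ∈ Finset.range (L + 1), 0 < binomPmf L p0 k :=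
    fun k hk => binomPmf_pos hp0 hp0' hk
  have hrat1 : ∀ k ∈ Finset.range (L + 1), 0 < binomPmf L p0 k / binomPmf L p1 k :=
    fun k hk => div_pos (hv k hk) (hw k hk)
  have hrat2 : ∀ k ∈ Finset.range (L + 1), 0 < binomPmf L p1 k / binomPmf L p0 k :=
    fun k hk => div_pos (hw k hk) (hv k hk)
  have hin1 : ∀ k ∈ Finset.range (L + 1),
      0 < μ + (1 - μ) * (binomPmf L p0 k / binomPmf L p1 k) := by
    intro k hk
    rcases eq_or_lt_of_le hμ0 with h | h
    · rw [← h]; simpa using hrat1 k hk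
    · have := mul_nonneg (by linarith : (0:ℝ) ≤ 1 - μ) (hrat1 k hk).le
      linarith
  have hin2 : ∀ k ∈ Finset.range (L + 1),
      0 < 1 - μ + μ * (binomPmf L p1 k / binomPmf L p0 k) := by
    intro k hk
    rcases eq_or_lt_of_le hμ1 with h | h
    · rw [h]; simpa using hrat2 k hk
    · have := mul_nonneg hμ0 (hrat2 k hk).le
      linarith
  -- identity for mutInfo
  have hI : mutInfo L p0 p1 μ =
      μ * (∑ k ∈ Finset.range (L + 1), binomPmf L p1 k * Real.log (binomPmf L p1 k)) +
        (1 - μ) * (∑ k ∈ Finset.range (L + 1), binomPmf L p0 k * Real.log (binomPmf L p0 k)) -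
        ∑ k ∈ Finset.range (L + 1), (μ * binomPmf L p1 k + (1 - μ) * binomPmf L p0 k) *
          Real.log (μ * binomPmf L p1 k + (1 - μ) * binomPmf L p0 k) := by
    simp only [mutInfo, entropyOn]
    ring
  have hbig : ∑ k ∈ Finset.range (L + 1), (μ * binomPmf L p1 k + (1 - μ) * binomPmf L p0 k) *
      Real.log (μ * binomPmf L p1 k + (1 - μ) * binomPmf L p0 k) =
      μ * (∑ k ∈ Finset.range (L + 1), binomPmf L p1 k * Real.log (binomPmf L p1 k)) +
      (1 - μ) * (∑ k ∈ Finset.range (L + 1), binomPmf L p0 k * Real.log (binomPmf L p0 k)) +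
      μ * (∑ k ∈ Finset.range (L + 1), binomPmf L p1 k *
        Real.log (μ + (1 - μ) * (binomPmf L p0 k / binomPmf L p1 k))) +
      (1 - μ) * (∑ k ∈ Finset.range (L + 1), binomPmf L p0 k *
        Real.log (1 - μ + μ * (binomPmf L p1 k / binomPmf L p0 k))) := by
    have hterm : ∀ k ∈ Finset.range (L + 1),
        (μ * binomPmf L p1 k + (1 - μ) * binomPmf L p0 k) *
          Real.log (μ * binomPmf L p1 k + (1 - μ) * binomPmf L p0 k) =
        μ * (binomPmf L p1 k * Real.log (binomPmf L p1 k)) +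
        (1 - μ) * (binomPmf L p0 k * Real.log (binomPmf L p0 k)) +
        (μ * (binomPmf L p1 k *
          Real.log (μ + (1 - μ) * (binomPmf L p0 k / binomPmf L p1 k))) +
        (1 - μ) * (binomPmf L p0 k *
          Real.log (1 - μ + μ * (binomPmf L p1 k / binomPmf L p0 k)))) := by
      intro k hk
      have em1 : μ * binomPmf L p1 k + (1 - μ) * binomPmf L p0 k =
          binomPmf L p1 k * (μ + (1 - μ) * (binomPmf L p0 k / binomPmf L p1 k)) := by
        field_simp [(hw k hk).ne', (hv k hk).ne']
      have em2 : μ * binomPmf L p1 k + (1 - μ) * binomPmf L p0 k =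
          binomPmf L p0 k * (1 - μ + μ * (binomPmf L p1 k / binomPmf L p0 k)) := by
        field_simp [(hw k hk).ne', (hv k hk).ne']
        ring
      have e1 : Real.log (μ * binomPmf L p1 k + (1 - μ) * binomPmf L p0 k) =
          Real.log (binomPmf L p1 k) +
            Real.log (μ + (1 - μ) * (binomPmf L p0 k / binomPmf L p1 k)) := by
        rw [em1, Real.log_mul (hw k hk).ne' (hin1 k hk).ne']
      have e2 : Real.log (μ * binomPmf L p1 k + (1 - μ) * binomPmf L p0 k) =
          Real.log (binomPmf L p0 k) +
            Real.log (1 - μ + μ * (binomPmf L p1 k / binomPmf L p0 k)) := by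
        rw [em2, Real.log_mul (hv k hk).ne' (hin2 k hk).ne']
      linear_combination (μ * binomPmf L p1 k) * e1 + ((1 - μ) * binomPmf L p0 k) * e2
    rw [Finset.sum_congr rfl hterm, Finset.sum_add_distrib, Finset.sum_add_distrib,
      Finset.sum_add_distrib, ← Finset.mul_sum, ← Finset.mul_sum, ← Finset.mul_sum,
      ← Finset.mul_sum]
    ring
  have hI2 : mutInfo L p0 p1 μ =
      -(μ * (∑ k ∈ Finset.range (L + 1), binomPmf L p1 k *
        Real.log (μ + (1 - μ) * (binomPmf L p0 k / binomPmf L p1 k)))) -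
      (1 - μ) * (∑ k ∈ Finset.range (L + 1), binomPmf L p0 k *
        Real.log (1 - μ + μ * (binomPmf L p1 k / binomPmf L p0 k))) := by
    rw [hI, hbig]
    ring
  -- lower bounds on the two sums
  have hg1 : Real.log (μ + (1 - μ) * β1) ≤
      ∑ k ∈ Finset.range (L + 1), binomPmf L p1 k *
        Real.log (μ + (1 - μ) * (binomPmf L p0 k / binomPmf L p1 k)) := by
    rw [hβ1, beta_exp L hL hp0 hp0' hp1' hp1]
    exact geom_mix (Finset.range (L + 1)) (binomPmf L p1)
      (fun k => binomPmf L p0 k / binomPmf L p1 k) (fun k hk => (hw k hk).le) hrat1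
      (binomPmf_sum L p1) hμ0 hμ1
  have hg2 : Real.log (1 - μ + μ * β2) ≤
      ∑ k ∈ Finset.range (L + 1), binomPmf L p0 k *
        Real.log (1 - μ + μ * (binomPmf L p1 k / binomPmf L p0 k)) := by
    have h := geom_mix (Finset.range (L + 1)) (binomPmf L p0)
      (fun k => binomPmf L p1 k / binomPmf L p0 k) (fun k hk => (hv k hk).le) hrat2
      (binomPmf_sum L p0) (μ := 1 - μ) (by linarith) (by linarith)
    rw [show (1:ℝ) - (1 - μ) = μ by ring] at h
    rw [hβ2, beta_exp L hL hp1' hp1 hp0 hp0']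
    exact h
  have b1 := mul_le_mul_of_nonneg_left hg1 hμ0
  have b2 := mul_le_mul_of_nonneg_left hg2 (by linarith : (0:ℝ) ≤ 1 - μ)
  rw [hI2]
  linarith


/-- with β1 = ((p0/p1)^{p1}·((1−p0)/(1−p1))^{1−p1})^L and
β2 = ((p1/p0)^{p0}·((1−p1)/(1−p0))^{1−p0})^L,
sup_{μ∈[0,1]} I(μ) ≤ |β1−β2|·(1−min{β1,β2})/(1−β1·β2) − ln((1−β1·β2)/(2−β1−β2)). -/
theorem mutInfo_sup_upper_bound (p0 p1 : ℝ) (L : ℕ)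
    (hp0 : 0 < p0) (hp01 : p0 < p1) (hp1 : p1 < 1) (hL : 1 ≤ L)
    (β1 β2 : ℝ)
    (hβ1 : β1 = ((p0 / p1) ^ p1 * ((1 - p0) / (1 - p1)) ^ (1 - p1)) ^ L)
    (hβ2 : β2 = ((p1 / p0) ^ p0 * ((1 - p1) / (1 - p0)) ^ (1 - p0)) ^ L) :
    (⨆ μ : Set.Icc (0:ℝ) 1, mutInfo L p0 p1 μ) ≤
      |β1 - β2| * (1 - min β1 β2) / (1 - β1 * β2) -
        Real.log ((1 - β1 * β2) / (2 - β1 - β2)) := by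
  have hp1' : 0 < p1 := hp0.trans hp01
  have hp0' : p0 < 1 := hp01.trans hp1
  have hβ1pos : 0 < β1 := hβ1 ▸ beta_pos L hp0 hp0' hp1' hp1
  have hβ1lt : β1 < 1 := hβ1 ▸ beta_lt_one L hL hp0 hp0' hp1' hp1 (ne_of_lt hp01)
  have hβ2pos : 0 < β2 := hβ2 ▸ beta_pos L hp1' hp1 hp0 hp0'
  have hβ2lt : β2 < 1 := hβ2 ▸ beta_lt_one L hL hp1' hp1 hp0 hp0' (ne_of_gt hp01)
  have hne : Nonempty (Set.Icc (0:ℝ) 1) := ⟨⟨0, by norm_num⟩⟩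
  apply ciSup_le
  rintro ⟨μ, hμ0, hμ1⟩
  calc mutInfo L p0 p1 μ ≤
      -(μ * Real.log (μ + (1 - μ) * β1)) - (1 - μ) * Real.log (1 - μ + μ * β2) :=
        mutInfo_le p0 p1 L hp0 hp01 hp1 hL β1 β2 hβ1 hβ2 hμ0 hμ1
    _ ≤ _ := final_alg β1 β2 μ hβ1pos hβ1lt hβ2pos hβ2lt hμ0 hμ1
end

section
/- Let β, β1, β2 ∈ (0,1) with β1 ≤ β and β2 ≤ β. Then the bound gap satisfies Δ(β,β1,β2) ≤ (1/108)·(β/β1 − 1)·(16·β/β1 + 11) + (1/108)·(β/β2 − 1)·(16·β/β2 + 11). -/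
/-- The bound gap Δ(β,β1,β2) = sup_{μ∈[0,1]} (F_u(μ,β1,β2) − F_l(μ,β)). -/
noncomputable def boundGap (β β1 β2 : ℝ) : ℝ :=
  ⨆ μ : Set.Icc (0:ℝ) 1, (Fu μ β1 β2 - Fl μ β)

open Real

lemma mul_log_mix_sub_le {μ b B : ℝ} (hμ0 : 0 ≤ μ) (hμ1 : μ ≤ 1) (hb : 0 < b) (hb1 : b ≤ 1)
    (hbB : b ≤ B) :
    μ * (log ((1 - μ) * B + μ) - log ((1 - μ) * b + μ)) ≤ (B / b - 1) / 4 := by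
  set A := (1 - μ) * b + μ
  have hbA : b ≤ A := by nlinarith
  have hA : 0 < A := hb.trans_le hbA
  have hA' : 0 < (1 - μ) * B + μ := by nlinarith
  have hlog : log ((1 - μ) * B + μ) - log A ≤ (1 - μ) * (B - b) / A := by
    rw [← log_div hA'.ne' hA.ne']
    convert log_le_sub_one_of_pos (div_pos hA' hA) using 1
    field_simp
    ring
  calc μ * (log ((1 - μ) * B + μ) - log A)
      ≤ μ * ((1 - μ) * (B - b) / A) := mul_le_mul_of_nonneg_left hlog hμ0
    _ ≤ μ * ((1 - μ) * (B - b) / b) := by gcongr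
    _ = μ * (1 - μ) * (B / b - 1) := by field_simp
    _ ≤ (B / b - 1) / 4 := by
      have : 0 ≤ B / b - 1 := by rw [sub_nonneg, one_le_div hb]; exact hbB
      nlinarith [sq_nonneg (μ - 1 / 2)]

lemma quarter_sub_one_le {r : ℝ} (hr : 1 ≤ r) :
    (r - 1) / 4 ≤ 1 / 108 * (r - 1) * (16 * r + 11) := by
  nlinarith

lemma Fu_sub_Fl (μ β β1 β2 : ℝ) :
    Fu μ β1 β2 - Fl μ β =
      μ * (log ((1 - μ) * β + μ) - log ((1 - μ) * β1 + μ)) +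
        (1 - μ) * (log ((1 - (1 - μ)) * β + (1 - μ)) - log ((1 - (1 - μ)) * β2 + (1 - μ))) := by
  simp only [Fu, Fl, sub_sub_cancel]
  ring

lemma Fu_sub_Fl_le {μ β β1 β2 : ℝ} (hμ0 : 0 ≤ μ) (hμ1 : μ ≤ 1) (hβ1 : β1 ∈ Set.Ioc (0 : ℝ) 1)
    (hβ2 : β2 ∈ Set.Ioc (0 : ℝ) 1) (h1 : β1 ≤ β) (h2 : β2 ≤ β) :
    Fu μ β1 β2 - Fl μ β ≤ (β / β1 - 1) / 4 + (β / β2 - 1) / 4 := by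
  rw [Fu_sub_Fl]
  exact add_le_add (mul_log_mix_sub_le hμ0 hμ1 hβ1.1 hβ1.2 h1)
    (mul_log_mix_sub_le (by linarith) (by linarith) hβ2.1 hβ2.2 h2)

theorem boundGap_le_lowSNR_general (β β1 β2 : ℝ)
    (hβ1 : β1 ∈ Set.Ioo (0:ℝ) 1) (hβ2 : β2 ∈ Set.Ioo (0:ℝ) 1)
    (h1 : β1 ≤ β) (h2 : β2 ≤ β) :
    boundGap β β1 β2 ≤
      1 / 108 * (β / β1 - 1) * (16 * (β / β1) + 11) +
        1 / 108 * (β / β2 - 1) * (16 * (β / β2) + 11) := by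
  have hr1 : 1 ≤ β / β1 := (one_le_div hβ1.1).2 h1
  have hr2 : 1 ≤ β / β2 := (one_le_div hβ2.1).2 h2
  refine ciSup_le fun ⟨μ, hμ0, hμ1⟩ => ?_
  exact (Fu_sub_Fl_le hμ0 hμ1 (Set.Ioo_subset_Ioc_self hβ1)
    (Set.Ioo_subset_Ioc_self hβ2) h1 h2).trans
    (add_le_add (quarter_sub_one_le hr1) (quarter_sub_one_le hr2))

/-- low-SNR bound: for β, β1, β2 ∈ (0,1) with β1 ≤ β and β2 ≤ β,
Δ(β,β1,β2) ≤ (1/108)·(β/β1 − 1)·(16·β/β1 + 11) + (1/108)·(β/β2 − 1)·(16·β/β2 + 11). -/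
theorem boundGap_le_lowSNR (β β1 β2 : ℝ)
    (hβ : β ∈ Set.Ioo (0:ℝ) 1) (hβ1 : β1 ∈ Set.Ioo (0:ℝ) 1) (hβ2 : β2 ∈ Set.Ioo (0:ℝ) 1)
    (h1 : β1 ≤ β) (h2 : β2 ≤ β) :
    boundGap β β1 β2 ≤
      1 / 108 * (β / β1 - 1) * (16 * (β / β1) + 11) +
        1 / 108 * (β / β2 - 1) * (16 * (β / β2) + 11) :=
  boundGap_le_lowSNR_general β β1 β2 hβ1 hβ2 h1 h2
end

section
/- Fix p0, p1 with 0 < p0 < p1 < 1, and for each integer L ≥ 1 set β(L) = (√(p0·p1) + √((1−p0)·(1−p1)))^L, β1(L) = ((p0/p1)^{p1}·((1−p0)/(1−p1))^{1−p1})^L, β2(L) = ((p1/p0)^{p0}·((1−p1)/(1−p0))^{1−p0})^L, and Δ_L = Δ(β(L),β1(L),β2(L)). Then lim_{L→∞} (ln Δ_L)/L = ln(√(p0·p1) + √((1−p0)·(1−p1))); equivalently, the bound gap Δ_L converges to zero at the exponential rate −ln(√(p0·p1) + √((1−p0)·(1−p1))). -/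
/-- Pointwise upper bound on the gap. -/
lemma gap_le {β β1 β2 μ : ℝ} (hμ0 : 0 ≤ μ) (hμ1 : μ ≤ 1) (h1 : 0 < β1) (h2 : 0 < β2)
    (h1β : β1 ≤ β) (h2β : β2 ≤ β) : Fu μ β1 β2 - Fl μ β ≤ β := by
  have hA1 : 0 < (1 - μ) * β1 + μ := by
    rcases eq_or_lt_of_le hμ0 with h | h
    · simpa [← h] using h1
    · have : 0 ≤ (1 - μ) * β1 := mul_nonneg (by linarith) h1.le
      linarith
  have hA2 : 0 < μ * β2 + (1 - μ) := by
    rcases eq_or_lt_of_le hμ1 with h | h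
    · rw [h]; simpa using h2
    · have : 0 ≤ μ * β2 := mul_nonneg hμ0 h2.le
      linarith
  have hB1 : 0 < (1 - μ) * β + μ := by
    have h := mul_le_mul_of_nonneg_left h1β (by linarith : 0 ≤ 1 - μ)
    linarith
  have hB2 : 0 < μ * β + (1 - μ) := by
    have h := mul_le_mul_of_nonneg_left h2β hμ0
    linarith
  have key1 : μ * (Real.log ((1-μ)*β + μ) - Real.log ((1-μ)*β1 + μ)) ≤ (1-μ)*(β-β1) := by
    have hlog : Real.log ((1-μ)*β + μ) - Real.log ((1-μ)*β1 + μ)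
        ≤ ((1-μ)*β + μ)/((1-μ)*β1 + μ) - 1 := by
      rw [← Real.log_div hB1.ne' hA1.ne']
      exact Real.log_le_sub_one_of_pos (div_pos hB1 hA1)
    have hc : 0 ≤ (1-μ)*(β-β1) := mul_nonneg (by linarith) (by linarith)
    have hμA : μ ≤ (1-μ)*β1 + μ := by
      have : 0 ≤ (1-μ)*β1 := mul_nonneg (by linarith) h1.le
      linarith
    have h3 : μ * (((1-μ)*β + μ)/((1-μ)*β1 + μ) - 1) ≤ (1-μ)*(β-β1) := by
      rw [div_sub_one hA1.ne']
      have e : (1-μ)*β + μ - ((1-μ)*β1 + μ) = (1-μ)*(β-β1) := by ring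
      rw [e]
      calc μ * ((1-μ)*(β-β1) / ((1-μ)*β1+μ)) = ((1-μ)*(β-β1)) * (μ / ((1-μ)*β1+μ)) := by
            ring
        _ ≤ ((1-μ)*(β-β1)) * 1 := by
            apply mul_le_mul_of_nonneg_left _ hc
            exact div_le_one_of_le₀ hμA hA1.le
        _ = (1-μ)*(β-β1) := mul_one _
    calc μ * (Real.log ((1-μ)*β + μ) - Real.log ((1-μ)*β1 + μ))
        ≤ μ * (((1-μ)*β + μ)/((1-μ)*β1 + μ) - 1) := mul_le_mul_of_nonneg_left hlog hμ0
      _ ≤ (1-μ)*(β-β1) := h3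
  have key2 : (1-μ) * (Real.log (μ*β + (1-μ)) - Real.log (μ*β2 + (1-μ))) ≤ μ*(β-β2) := by
    have hlog : Real.log (μ*β + (1-μ)) - Real.log (μ*β2 + (1-μ))
        ≤ (μ*β + (1-μ))/(μ*β2 + (1-μ)) - 1 := by
      rw [← Real.log_div hB2.ne' hA2.ne']
      exact Real.log_le_sub_one_of_pos (div_pos hB2 hA2)
    have hc : 0 ≤ μ*(β-β2) := mul_nonneg hμ0 (by linarith)
    have hμA : (1-μ) ≤ μ*β2 + (1-μ) := by
      have : 0 ≤ μ*β2 := mul_nonneg hμ0 h2.le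
      linarith
    have h3 : (1-μ) * ((μ*β + (1-μ))/(μ*β2 + (1-μ)) - 1) ≤ μ*(β-β2) := by
      rw [div_sub_one hA2.ne']
      have e : μ*β + (1-μ) - (μ*β2 + (1-μ)) = μ*(β-β2) := by ring
      rw [e]
      calc (1-μ) * (μ*(β-β2) / (μ*β2+(1-μ))) = (μ*(β-β2)) * ((1-μ) / (μ*β2+(1-μ))) := by
            ring
        _ ≤ (μ*(β-β2)) * 1 := by
            apply mul_le_mul_of_nonneg_left _ hc
            exact div_le_one_of_le₀ hμA hA2.le
        _ = μ*(β-β2) := mul_one _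
    calc (1-μ) * (Real.log (μ*β + (1-μ)) - Real.log (μ*β2 + (1-μ)))
        ≤ (1-μ) * ((μ*β + (1-μ))/(μ*β2 + (1-μ)) - 1) :=
          mul_le_mul_of_nonneg_left hlog (by linarith)
      _ ≤ μ*(β-β2) := h3
  have hn1 : 0 ≤ (1-μ)*β1 := mul_nonneg (by linarith) h1.le
  have hn2 : 0 ≤ μ*β2 := mul_nonneg hμ0 h2.le
  simp only [Fu, Fl]
  nlinarith [key1, key2, hn1, hn2]

/-- Lower bound for the gap at μ = 1/2. -/
lemma gap_at_half {β β1 β2 : ℝ} (hβ0 : 0 < β) (hβ1 : β ≤ 1) (h1 : 0 ≤ β1) (h1' : β1 ≤ β^2)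
    (h2 : 0 ≤ β2) (h2' : β2 ≤ β^2) :
    β * (1 - β) / 2 ≤ Fu (1/2) β1 β2 - Fl (1/2) β := by
  have e : Fu (1/2) β1 β2 - Fl (1/2) β
      = Real.log ((1/2)*β + (1/2)) - (1/2) * Real.log ((1/2)*β1 + (1/2))
        - (1/2) * Real.log ((1/2)*β2 + (1/2)) := by
    simp only [Fu, Fl]
    norm_num
    ring_nf
  set u : ℝ := (1/2)*β + (1/2) with hu_def
  set v : ℝ := (1/2)*β^2 + (1/2) with hv_def
  have hu : 0 < u := by simp only [hu_def]; nlinarith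
  have hv : 0 < v := by simp only [hv_def]; nlinarith
  have hvu : v ≤ u := by simp only [hu_def, hv_def]; nlinarith
  have hu1 : u ≤ 1 := by simp only [hu_def]; nlinarith
  have l1 : Real.log ((1/2)*β1 + (1/2)) ≤ Real.log v := by
    apply Real.log_le_log (by linarith)
    simp only [hv_def]; linarith
  have l2 : Real.log ((1/2)*β2 + (1/2)) ≤ Real.log v := by
    apply Real.log_le_log (by linarith)
    simp only [hv_def]; linarith
  have l3 : Real.log v - Real.log u ≤ v/u - 1 := by
    rw [← Real.log_div hv.ne' hu.ne']
    exact Real.log_le_sub_one_of_pos (div_pos hv hu)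
  have l4 : v/u - 1 ≤ v - u := by
    rw [div_sub_one hu.ne', div_le_iff₀ hu]
    nlinarith
  have l5 : u - v = β * (1 - β) / 2 := by simp only [hu_def, hv_def]; ring
  linarith [e.ge, e.le]

/-- Key inequality: exp(−KL) ≤ (Bhattacharyya)². -/
lemma base_le_sq {x y : ℝ} (hx0 : 0 < x) (hx1 : x < 1) (hy0 : 0 < y) (hy1 : y < 1) :
    (x/y)^y * ((1-x)/(1-y))^(1-y) ≤ (Real.sqrt (x*y) + Real.sqrt ((1-x)*(1-y)))^2 := by
  set a := Real.sqrt (x/y) with ha_def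
  set b := Real.sqrt ((1-x)/(1-y)) with hb_def
  have hxy : 0 < x/y := div_pos hx0 hy0
  have hxy' : 0 < (1-x)/(1-y) := div_pos (by linarith) (by linarith)
  have ea : (x/y)^y = a^y * a^y := by
    rw [← Real.mul_rpow (Real.sqrt_nonneg _) (Real.sqrt_nonneg _), Real.mul_self_sqrt hxy.le]
  have eb : ((1-x)/(1-y))^(1-y) = b^(1-y) * b^(1-y) := by
    rw [← Real.mul_rpow (Real.sqrt_nonneg _) (Real.sqrt_nonneg _), Real.mul_self_sqrt hxy'.le]
  have key := Real.geom_mean_le_arith_mean2_weighted hy0.le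
    (by linarith : (0:ℝ) ≤ 1-y) (Real.sqrt_nonneg (x/y)) (Real.sqrt_nonneg ((1-x)/(1-y)))
    (by ring)
  have e3 : y * a = Real.sqrt (x*y) := by
    have h5 : Real.sqrt (y^2 * (x/y)) = y * a := by
      rw [Real.sqrt_mul (by positivity) (x/y), Real.sqrt_sq hy0.le]
    rw [← h5]
    congr 1
    field_simp
  have e4 : (1-y) * b = Real.sqrt ((1-x)*(1-y)) := by
    have hy' : (1:ℝ) - y ≠ 0 := by linarith
    have h5 : Real.sqrt ((1-y)^2 * ((1-x)/(1-y))) = (1-y) * b := by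
      rw [Real.sqrt_mul (by positivity) ((1-x)/(1-y)), Real.sqrt_sq (by linarith)]
    rw [← h5]
    congr 1
    field_simp
  calc (x/y)^y * ((1-x)/(1-y))^(1-y) = (a^y * b^(1-y))^2 := by rw [ea, eb]; ring
    _ ≤ (y*a + (1-y)*b)^2 := by
        apply pow_le_pow_left₀ (by positivity) _ 2
        exact key
    _ = (Real.sqrt (x*y) + Real.sqrt ((1-x)*(1-y)))^2 := by rw [e3, e4]

set_option maxHeartbeats 1000000 in
/-- with β(L) = (√(p0·p1) + √((1−p0)·(1−p1)))^L,
β1(L) = ((p0/p1)^{p1}·((1−p0)/(1−p1))^{1−p1})^L,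
β2(L) = ((p1/p0)^{p0}·((1−p1)/(1−p0))^{1−p0})^L and Δ_L = Δ(β(L),β1(L),β2(L)),
one has lim_{L→∞} (ln Δ_L)/L = ln(√(p0·p1) + √((1−p0)·(1−p1))), i.e. Δ_L → 0 at the
exponential rate −ln(√(p0·p1) + √((1−p0)·(1−p1))). -/
theorem boundGap_exponential_rate_largeL (p0 p1 : ℝ)
    (hp0 : 0 < p0) (hp01 : p0 < p1) (hp1 : p1 < 1) :
    Filter.Tendsto
      (fun L : ℕ =>
        Real.log
            (boundGap ((Real.sqrt (p0 * p1) + Real.sqrt ((1 - p0) * (1 - p1))) ^ L)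
              (((p0 / p1) ^ p1 * ((1 - p0) / (1 - p1)) ^ (1 - p1)) ^ L)
              (((p1 / p0) ^ p0 * ((1 - p1) / (1 - p0)) ^ (1 - p0)) ^ L)) /
          (L : ℝ))
      Filter.atTop
      (nhds (Real.log (Real.sqrt (p0 * p1) + Real.sqrt ((1 - p0) * (1 - p1))))) := by
  have hp1pos : 0 < p1 := lt_trans hp0 hp01
  have hp0lt1 : p0 < 1 := lt_trans hp01 hp1
  set B := Real.sqrt (p0 * p1) + Real.sqrt ((1 - p0) * (1 - p1)) with hBdef
  set C1 := (p0 / p1) ^ p1 * ((1 - p0) / (1 - p1)) ^ (1 - p1) with hC1def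
  set C2 := (p1 / p0) ^ p0 * ((1 - p1) / (1 - p0)) ^ (1 - p0) with hC2def
  have hB0 : 0 < B := by
    have h1 : 0 < Real.sqrt (p0*p1) := Real.sqrt_pos.mpr (by positivity)
    have h2 := Real.sqrt_nonneg ((1-p0)*(1-p1))
    simp only [hBdef]; linarith
  have hBlt : B < 1 := by
    have h1 : Real.sqrt (p0*p1) < (p0+p1)/2 := by
      have h := Real.sqrt_lt_sqrt (by positivity : (0:ℝ) ≤ p0*p1)
        (by nlinarith : p0*p1 < ((p0+p1)/2)^2)
      rwa [Real.sqrt_sq (by linarith)] at h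
    have h2 : Real.sqrt ((1-p0)*(1-p1)) < ((1-p0)+(1-p1))/2 := by
      have h := Real.sqrt_lt_sqrt (mul_nonneg (by linarith) (by linarith) : (0:ℝ) ≤ (1-p0)*(1-p1))
        (by nlinarith : (1-p0)*(1-p1) < (((1-p0)+(1-p1))/2)^2)
      rwa [Real.sqrt_sq (by linarith)] at h
    simp only [hBdef]; linarith
  have hC1pos : 0 < C1 :=
    mul_pos (Real.rpow_pos_of_pos (div_pos hp0 hp1pos) _)
      (Real.rpow_pos_of_pos (div_pos (by linarith) (by linarith)) _)
  have hC2pos : 0 < C2 :=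
    mul_pos (Real.rpow_pos_of_pos (div_pos hp1pos hp0) _)
      (Real.rpow_pos_of_pos (div_pos (by linarith) (by linarith)) _)
  have hC1le : C1 ≤ B^2 := base_le_sq hp0 hp0lt1 hp1pos hp1
  have hC2le : C2 ≤ B^2 := by
    have h := base_le_sq hp1pos hp1 hp0 hp0lt1
    rw [mul_comm p1 p0, mul_comm (1-p1) (1-p0)] at h
    exact h
  have hB2leB : B^2 ≤ B := by
    calc B^2 = B*B := sq B
      _ ≤ 1*B := mul_le_mul_of_nonneg_right hBlt.le hB0.le
      _ = B := one_mul B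
  have hC1leB : C1 ≤ B := le_trans hC1le hB2leB
  have hC2leB : C2 ≤ B := le_trans hC2le hB2leB
  have hhalfpos : 0 < (1-B)/2 := by linarith
  have hmain : ∀ L : ℕ, 1 ≤ L →
      (Real.log B + Real.log ((1-B)/2) / L ≤ Real.log (boundGap (B^L) (C1^L) (C2^L)) / L ∧
       Real.log (boundGap (B^L) (C1^L) (C2^L)) / L ≤ Real.log B) := by
    intro L hL
    have hLpos : (0:ℝ) < L := by exact_mod_cast hL
    have hβpos : 0 < B^L := pow_pos hB0 L
    have hβleB : B^L ≤ B := by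
      have := pow_le_pow_of_le_one hB0.le hBlt.le hL
      simpa using this
    have hβle1 : B^L ≤ 1 := le_trans hβleB hBlt.le
    have hβ1pos : 0 < C1^L := pow_pos hC1pos L
    have hβ2pos : 0 < C2^L := pow_pos hC2pos L
    have hβ1le : C1^L ≤ B^L := pow_le_pow_left₀ hC1pos.le hC1leB L
    have hβ2le : C2^L ≤ B^L := pow_le_pow_left₀ hC2pos.le hC2leB L
    have hβ1sq : C1^L ≤ (B^L)^2 := by
      calc C1^L ≤ (B^2)^L := pow_le_pow_left₀ hC1pos.le hC1le L
        _ = (B^L)^2 := by rw [← pow_mul, ← pow_mul, Nat.mul_comm]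
    have hβ2sq : C2^L ≤ (B^L)^2 := by
      calc C2^L ≤ (B^2)^L := pow_le_pow_left₀ hC2pos.le hC2le L
        _ = (B^L)^2 := by rw [← pow_mul, ← pow_mul, Nat.mul_comm]
    haveI : Nonempty (Set.Icc (0:ℝ) 1) := ⟨⟨0, by norm_num⟩⟩
    have hbdd : BddAbove (Set.range fun μ : Set.Icc (0:ℝ) 1 =>
        Fu μ (C1^L) (C2^L) - Fl μ (B^L)) := by
      refine ⟨B^L, ?_⟩
      rintro z ⟨μ, rfl⟩
      exact gap_le μ.2.1 μ.2.2 hβ1pos hβ2pos hβ1le hβ2le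
    have hub : boundGap (B^L) (C1^L) (C2^L) ≤ B^L := by
      rw [boundGap]
      exact ciSup_le fun μ => gap_le μ.2.1 μ.2.2 hβ1pos hβ2pos hβ1le hβ2le
    have hlb : B^L * (1 - B^L) / 2 ≤ boundGap (B^L) (C1^L) (C2^L) := by
      rw [boundGap]
      refine le_trans (gap_at_half hβpos hβle1 hβ1pos.le hβ1sq hβ2pos.le hβ2sq) ?_
      exact le_ciSup hbdd ⟨1/2, by norm_num⟩
    have hβlt1 : B^L < 1 := lt_of_le_of_lt hβleB hBlt
    have hΔpos : 0 < boundGap (B^L) (C1^L) (C2^L) := by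
      refine lt_of_lt_of_le ?_ hlb
      have h := mul_pos hβpos (by linarith : (0:ℝ) < 1 - B^L)
      linarith
    have hlog_ub : Real.log (boundGap (B^L) (C1^L) (C2^L)) ≤ L * Real.log B := by
      calc Real.log (boundGap (B^L) (C1^L) (C2^L)) ≤ Real.log (B^L) :=
            Real.log_le_log hΔpos hub
        _ = L * Real.log B := by rw [Real.log_pow]
    have hlog_lb : (L:ℝ) * Real.log B + Real.log ((1-B)/2)
        ≤ Real.log (boundGap (B^L) (C1^L) (C2^L)) := by
      have h1 : Real.log (B^L * ((1-B)/2)) ≤ Real.log (boundGap (B^L) (C1^L) (C2^L)) := by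
        apply Real.log_le_log (by positivity)
        refine le_trans ?_ hlb
        have h3 : (1-B)/2 ≤ (1-B^L)/2 := by linarith
        calc B^L * ((1-B)/2) ≤ B^L * ((1-B^L)/2) :=
              mul_le_mul_of_nonneg_left h3 hβpos.le
          _ = B^L * (1-B^L)/2 := by ring
      rwa [Real.log_mul (pow_ne_zero L hB0.ne') hhalfpos.ne', Real.log_pow] at h1
    constructor
    · have h2 := (div_le_div_iff_of_pos_right hLpos).mpr hlog_lb
      rwa [add_div, mul_div_cancel_left₀ _ hLpos.ne'] at h2
    · have h2 := (div_le_div_iff_of_pos_right hLpos).mpr hlog_ub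
      rwa [mul_div_cancel_left₀ _ hLpos.ne'] at h2
  apply tendsto_of_tendsto_of_tendsto_of_le_of_le'
    (g := fun L : ℕ => Real.log B + Real.log ((1-B)/2) / L)
    (h := fun _ : ℕ => Real.log B)
  · simpa using
      (tendsto_const_div_atTop_nhds_zero_nat (Real.log ((1-B)/2))).const_add (Real.log B)
  · exact tendsto_const_nhds
  · filter_upwards [Filter.eventually_ge_atTop 1] with L hL
    exact (hmain L hL).1
  · filter_upwards [Filter.eventually_ge_atTop 1] with L hL
    exact (hmain L hL).2
end

section
/- Fix dead time τ > 0 and integer L ≥ 1, and assume zero background radiation so that p0 = 0 and, for peak power A > 0, p1(A) = 1 − exp(−A·τ). With β(A) = (1−p1(A))^{L/2} = exp(−A·τ·L/2), β1(A) = 0, β2(A) = (1−p1(A))^L = exp(−A·τ·L), and Δ(A) = Δ(β(A),β1(A),β2(A)), one has lim_{A→∞} (ln Δ(A))/A = −L·τ/2; that is, the bound gap converges to zero at exponential rate L·τ/2 in A. -/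
lemma log_diff_le (a b : ℝ) (ha : 0 < a) (hb : 0 < b) :
    Real.log a - Real.log b ≤ (a - b) / b := by
  rw [← Real.log_div ha.ne' hb.ne']
  have := Real.log_le_sub_one_of_pos (div_pos ha hb)
  have : Real.log (a / b) ≤ a / b - 1 := this
  calc Real.log (a / b) ≤ a / b - 1 := this
    _ = (a - b) / b := by field_simp

lemma log_one_add_ge (β : ℝ) (hβ : 0 ≤ β) : β / (1 + β) ≤ Real.log (1 + β) := by
  have h1 : (0:ℝ) < 1 + β := by linarith
  have := Real.log_le_sub_one_of_pos (show (0:ℝ) < 1/(1+β) by positivity)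
  rw [Real.log_div one_ne_zero h1.ne', Real.log_one] at this
  have h2 : 1 / (1 + β) - 1 = -(β / (1 + β)) := by field_simp; ring
  linarith [this, h2 ▸ this]

lemma pointwise_le (β : ℝ) (hβ0 : 0 < β) (hβ1 : β ≤ 1) (μ : ℝ)
    (hμ : μ ∈ Set.Icc (0:ℝ) 1) : Fu μ 0 (β^2) - Fl μ β ≤ β := by
  obtain ⟨hμ0, hμ1⟩ := hμ
  rcases eq_or_lt_of_le hμ0 with h0 | h0
  · simp [Fu, Fl, ← h0]; linarith
  rcases eq_or_lt_of_le hμ1 with h1 | h1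
  · simp [Fu, Fl, h1]; linarith
  have hμ1' : 0 < 1 - μ := by linarith
  have key : Fu μ 0 (β^2) - Fl μ β =
      μ * (Real.log ((1 - μ) * β + μ) - Real.log μ) +
      (1 - μ) * (Real.log (μ * β + (1 - μ)) - Real.log (μ * β^2 + (1 - μ))) := by
    simp only [Fu, Fl, mul_zero, zero_add]; ring
  rw [key]
  have ha : (0:ℝ) < (1 - μ) * β + μ := by positivity
  have hb : (0:ℝ) < μ * β + (1 - μ) := by positivity
  have hc : (0:ℝ) < μ * β^2 + (1 - μ) := by positivity
  have t1 : μ * (Real.log ((1 - μ) * β + μ) - Real.log μ) ≤ (1 - μ) * β := by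
    have := log_diff_le _ _ ha h0
    calc μ * (Real.log ((1 - μ) * β + μ) - Real.log μ)
        ≤ μ * (((1 - μ) * β + μ - μ) / μ) := by
          exact mul_le_mul_of_nonneg_left this hμ0
      _ = (1 - μ) * β := by field_simp; ring
  have t2 : (1 - μ) * (Real.log (μ * β + (1 - μ)) - Real.log (μ * β^2 + (1 - μ)))
      ≤ μ * β := by
    have hd := log_diff_le _ _ hb hc
    have hnum : μ * β + (1 - μ) - (μ * β^2 + (1 - μ)) = μ * (β - β^2) := by ring
    calc (1 - μ) * (Real.log (μ * β + (1 - μ)) - Real.log (μ * β^2 + (1 - μ)))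
        ≤ (1 - μ) * ((μ * β + (1 - μ) - (μ * β^2 + (1 - μ))) / (μ * β^2 + (1 - μ))) := by
          exact mul_le_mul_of_nonneg_left hd (by linarith)
      _ = μ * (β - β^2) * ((1 - μ) / (μ * β^2 + (1 - μ))) := by rw [hnum]; ring
      _ ≤ μ * (β - β^2) * 1 := by
          have hpos : 0 ≤ μ * (β - β^2) := by
            nlinarith [mul_nonneg (mul_nonneg hμ0 hβ0.le) (sub_nonneg.2 hβ1)]
          apply mul_le_mul_of_nonneg_left _ hpos
          rw [div_le_one hc]; nlinarith
      _ ≤ μ * β := by nlinarith [mul_nonneg (mul_nonneg hμ0 hβ0.le) hβ0.le]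
  linarith

lemma half_lower (β : ℝ) (hβ0 : 0 < β) (hβ1 : β ≤ 1) :
    β / 4 ≤ Fu (1/2) 0 (β^2) - Fl (1/2) β := by
  have h1 : (0:ℝ) < 1 + β := by linarith
  have h2 : (0:ℝ) < 1 + β^2 := by positivity
  have e1 : (1 - 1/2) * β + 1/2 = (1 + β)/2 := by ring
  have e2 : (1/2 : ℝ) * β + (1 - 1/2) = (1 + β)/2 := by ring
  have e3 : (1/2 : ℝ) * β^2 + (1 - 1/2) = (1 + β^2)/2 := by ring
  have e4 : (1 - (1/2:ℝ)) * 0 + 1/2 = 1/2 := by ring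
  have key : Fu (1/2) 0 (β^2) - Fl (1/2) β
      = (1/2) * (2 * Real.log (1 + β) - Real.log (1 + β^2)) := by
    simp only [Fu, Fl, e1, e2, e3, e4]
    rw [Real.log_div h1.ne' two_ne_zero, Real.log_div h2.ne' two_ne_zero,
      show (1/2 : ℝ) = 1/2 from rfl, Real.log_div one_ne_zero two_ne_zero, Real.log_one]
    ring
  rw [key]
  have hlog2 : Real.log (1 + β^2) ≤ Real.log (1 + β) := by
    apply Real.log_le_log h2
    nlinarith
  have hlb : β / 2 ≤ Real.log (1 + β) := by
    have ha := log_one_add_ge β hβ0.le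
    have hb : β / 2 ≤ β / (1 + β) := div_le_div_of_nonneg_left hβ0.le h1 (by linarith)
    linarith
  linarith


lemma gap_sandwich (β : ℝ) (hβ0 : 0 < β) (hβ1 : β ≤ 1) :
    β / 4 ≤ boundGap β 0 (β^2) ∧ boundGap β 0 (β^2) ≤ β := by
  have hbdd : BddAbove (Set.range fun μ : Set.Icc (0:ℝ) 1 => Fu μ 0 (β^2) - Fl μ β) := by
    refine ⟨β, ?_⟩
    rintro x ⟨μ, rfl⟩
    exact pointwise_le β hβ0 hβ1 μ μ.2
  constructor
  · calc β / 4 ≤ Fu (1/2) 0 (β^2) - Fl (1/2) β := half_lower β hβ0 hβ1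
      _ ≤ boundGap β 0 (β^2) :=
        le_ciSup hbdd (⟨1/2, by norm_num⟩ : Set.Icc (0:ℝ) 1)
  · exact ciSup_le fun μ => pointwise_le β hβ0 hβ1 μ μ.2

/-- with zero background radiation (p0 = 0, p1(A) = 1 − e^{−Aτ}),
β(A) = e^{−AτL/2}, β1(A) = 0, β2(A) = e^{−AτL}, and Δ(A) = Δ(β(A),β1(A),β2(A)),
one has lim_{A→∞} (ln Δ(A))/A = −L·τ/2. -/
theorem boundGap_exponential_rate_largeA_zeroNoise (τ : ℝ) (L : ℕ)
    (hτ : 0 < τ) (hL : 1 ≤ L) :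
    Filter.Tendsto
      (fun A : ℝ =>
        Real.log
            (boundGap (Real.exp (-(A * τ * L) / 2)) 0 (Real.exp (-(A * τ * L)))) / A)
      Filter.atTop (nhds (-((L : ℝ) * τ / 2))) := by
  have hL0 : (0:ℝ) < L := by exact_mod_cast hL
  have hlo : Filter.Tendsto (fun A : ℝ => -((L:ℝ) * τ / 2) - Real.log 4 / A)
      Filter.atTop (nhds (-((L : ℝ) * τ / 2))) := by
    have := Filter.Tendsto.div_atTop (tendsto_const_nhds (x := Real.log 4))
      (Filter.tendsto_id (α := ℝ))
    simpa using (tendsto_const_nhds (x := -((L:ℝ) * τ / 2))).sub this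
  have key : ∀ A : ℝ, 1 ≤ A →
      -((L:ℝ) * τ / 2) - Real.log 4 / A ≤
        Real.log (boundGap (Real.exp (-(A * τ * L) / 2)) 0 (Real.exp (-(A * τ * L)))) / A ∧
      Real.log (boundGap (Real.exp (-(A * τ * L) / 2)) 0 (Real.exp (-(A * τ * L)))) / A ≤
        -((L:ℝ) * τ / 2) := by
    intro A hA
    set β := Real.exp (-(A * τ * L) / 2) with hβdef
    have hβ0 : 0 < β := Real.exp_pos _
    have hAτL : 0 ≤ A * τ * L := by positivity
    have hβ1 : β ≤ 1 := by
      rw [hβdef]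
      apply Real.exp_le_one_iff.2
      linarith
    have hsq : Real.exp (-(A * τ * L)) = β^2 := by
      rw [hβdef, ← Real.exp_nat_mul]
      rw [show ((2:ℕ):ℝ) * (-(A * τ * L) / 2) = -(A * τ * L) by push_cast; ring]
    have hlogβ : Real.log β = -(A * τ * L) / 2 := Real.log_exp _
    obtain ⟨hg1, hg2⟩ := gap_sandwich β hβ0 hβ1
    have hA0 : (0:ℝ) < A := by linarith
    rw [hsq]
    have h1 : Real.log (β/4) ≤ Real.log (boundGap β 0 (β^2)) :=
      Real.log_le_log (by positivity) hg1
    have h2 : Real.log (boundGap β 0 (β^2)) ≤ Real.log β :=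
      Real.log_le_log (by linarith) hg2
    rw [Real.log_div hβ0.ne' (by norm_num), hlogβ] at h1
    rw [hlogβ] at h2
    constructor
    · have : (-(A * τ * L) / 2) / A = -((L:ℝ) * τ / 2) := by
        field_simp
      calc -((L:ℝ) * τ / 2) - Real.log 4 / A
          = (-(A * τ * L) / 2 - Real.log 4) / A := by rw [sub_div, this]
        _ ≤ _ := by gcongr
    · calc Real.log (boundGap β 0 (β^2)) / A ≤ (-(A * τ * L) / 2) / A := by gcongr
        _ = -((L:ℝ) * τ / 2) := by field_simp
  refine tendsto_of_tendsto_of_tendsto_of_le_of_le' hlo tendsto_const_nhds ?_ ?_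
  · filter_upwards [Filter.eventually_ge_atTop (1:ℝ)] with A hA
    exact (key A hA).1
  · filter_upwards [Filter.eventually_ge_atTop (1:ℝ)] with A hA
    exact (key A hA).2
end

section
/- Fix dead time τ > 0, peak power A > 0 and background intensity Λ0 ≥ 0. Then μ* lies in (0,1) and is the unique maximizer of F on [0,1]: F(μ) ≤ F(μ*) for every μ ∈ [0,1], with equality if and only if μ = μ*. Consequently the capacity of the non-perfect photon-counting receiver with sampling interval equal to the dead time is C_{τ,τ} = (1/τ)·F(μ*). -/
/-- p(x) = 1 − exp(−x·τ), the detection probability over a dead time τ. -/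
noncomputable def pdet (τ x : ℝ) : ℝ := 1 - Real.exp (-(x * τ))

/-- Binary entropy h_b(x) = −x·ln x − (1−x)·ln(1−x) (with 0·ln 0 = 0). -/
noncomputable def hb (x : ℝ) : ℝ := -(x * Real.log x) - (1 - x) * Real.log (1 - x)

/-- F(μ) = h_b((1−μ)·p(Λ0) + μ·p(A+Λ0)) − (1−μ)·h_b(p(Λ0)) − μ·h_b(p(A+Λ0)). -/
noncomputable def Fcap (τ A Λ0 μ : ℝ) : ℝ :=
  hb ((1 - μ) * pdet τ Λ0 + μ * pdet τ (A + Λ0)) -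
    (1 - μ) * hb (pdet τ Λ0) - μ * hb (pdet τ (A + Λ0))

/-- a = exp(−(h_b(p(A+Λ0)) − h_b(p(Λ0)))/(p(A+Λ0) − p(Λ0))). -/
noncomputable def aCoef (τ A Λ0 : ℝ) : ℝ :=
  Real.exp (-((hb (pdet τ (A + Λ0)) - hb (pdet τ Λ0)) /
    (pdet τ (A + Λ0) - pdet τ Λ0)))

/-- μ* = (a/(1+a) − p(Λ0))/(p(A+Λ0) − p(Λ0)), the optimal duty cycle. -/
noncomputable def muStar (τ A Λ0 : ℝ) : ℝ :=
  (aCoef τ A Λ0 / (1 + aCoef τ A Λ0) - pdet τ Λ0) / (pdet τ (A + Λ0) - pdet τ Λ0)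

lemma hb_continuous : Continuous hb := by
  have h1 := Real.continuous_mul_log
  have h2 : Continuous fun x : ℝ => (1 - x) * Real.log (1 - x) :=
    h1.comp (continuous_const.sub continuous_id)
  exact h1.neg.sub h2

lemma hb_hasDerivAt {x : ℝ} (h0 : 0 < x) (h1 : x < 1) :
    HasDerivAt hb (Real.log (1 - x) - Real.log x) x := by
  have hx : x ≠ 0 := ne_of_gt h0
  have hx1 : (1:ℝ) - x ≠ 0 := by linarith
  have d1 : HasDerivAt (fun x : ℝ => x * Real.log x) (Real.log x + 1) x :=
    Real.hasDerivAt_mul_log hx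
  have dlin : HasDerivAt (fun x : ℝ => 1 - x) (-1) x := by
    exact ((hasDerivAt_const x (1:ℝ)).sub (hasDerivAt_id x)).congr_deriv (by ring)
  have d2 : HasDerivAt (fun x : ℝ => (1 - x) * Real.log (1 - x))
      ((Real.log (1 - x) + 1) * (-1)) x :=
    (Real.hasDerivAt_mul_log hx1).comp x dlin
  have h := (d1.neg).sub d2
  exact h.congr_deriv (by ring)

/-- μ* ∈ (0,1) is the unique maximizer of F on [0,1], and consequently the
capacity C_{τ,τ} = (1/τ)·max_{μ∈[0,1]} F(μ) equals (1/τ)·F(μ*). -/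
theorem muStar_unique_maximizer_and_capacity (τ A Λ0 : ℝ)
    (hτ : 0 < τ) (hA : 0 < A) (hΛ0 : 0 ≤ Λ0) :
    muStar τ A Λ0 ∈ Set.Ioo (0:ℝ) 1 ∧
      (∀ μ ∈ Set.Icc (0:ℝ) 1,
        Fcap τ A Λ0 μ ≤ Fcap τ A Λ0 (muStar τ A Λ0) ∧
          (Fcap τ A Λ0 μ = Fcap τ A Λ0 (muStar τ A Λ0) ↔ μ = muStar τ A Λ0)) ∧
      (1 / τ) * (⨆ μ : Set.Icc (0:ℝ) 1, Fcap τ A Λ0 μ) =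
        (1 / τ) * Fcap τ A Λ0 (muStar τ A Λ0) := by
  set p0 := pdet τ Λ0 with hp0
  set p1 := pdet τ (A + Λ0) with hp1
  have h0 : 0 ≤ p0 := by
    rw [hp0, pdet]
    have : Real.exp (-(Λ0 * τ)) ≤ 1 := Real.exp_le_one_iff.mpr (by nlinarith)
    linarith
  have h1 : p1 < 1 := by
    rw [hp1, pdet]
    have := Real.exp_pos (-((A + Λ0) * τ))
    linarith
  have h01 : p0 < p1 := by
    rw [hp0, hp1, pdet, pdet]
    have : Real.exp (-((A + Λ0) * τ)) < Real.exp (-(Λ0 * τ)) :=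
      Real.exp_lt_exp.mpr (by nlinarith)
    linarith
  have hd : 0 < p1 - p0 := sub_pos.mpr h01
  set s := (hb p1 - hb p0) / (p1 - p0) with hs
  set a := Real.exp (-s) with ha
  have hapos : 0 < a := Real.exp_pos _
  set q := a / (1 + a) with hq
  have hq0 : 0 < q := div_pos hapos (by linarith)
  have hq1 : q < 1 := (div_lt_one (by linarith)).mpr (by linarith)
  have h1q : 1 - q = 1 / (1 + a) := by
    rw [hq]; field_simp; ring
  have hDq : Real.log (1 - q) - Real.log q = s := by
    rw [h1q, hq, Real.log_div one_ne_zero (by positivity),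
      Real.log_div (ne_of_gt hapos) (by positivity), Real.log_one, ha, Real.log_exp]
    ring
  have hDanti : ∀ x y : ℝ, 0 < x → x < y → y < 1 →
      Real.log (1 - y) - Real.log y < Real.log (1 - x) - Real.log x := by
    intro x y hx hxy hy
    have l1 : Real.log (1 - y) < Real.log (1 - x) :=
      Real.log_lt_log (by linarith) (by linarith)
    have l2 : Real.log x < Real.log y := Real.log_lt_log hx hxy
    linarith
  -- mean value theorem
  have hderiv : ∀ x ∈ Set.Ioo p0 p1,
      HasDerivAt hb (Real.log (1 - x) - Real.log x) x := fun x hx =>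
    hb_hasDerivAt (h0.trans_lt hx.1) (hx.2.trans h1)
  obtain ⟨ξ, hξ, hξeq⟩ := exists_hasDerivAt_eq_slope hb _ h01
    hb_continuous.continuousOn hderiv
  rw [← hs] at hξeq
  -- q = ξ, hence q ∈ Ioo p0 p1
  have hqξ : q = ξ := by
    rcases lt_trichotomy q ξ with h | h | h
    · exfalso
      have hlt := hDanti q ξ hq0 h (hξ.2.trans h1)
      rw [hDq, hξeq] at hlt; exact lt_irrefl _ hlt
    · exact h
    · exfalso
      have hlt := hDanti ξ q (h0.trans_lt hξ.1) h hq1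
      rw [hDq, hξeq] at hlt; exact lt_irrefl _ hlt
  have hqmem : q ∈ Set.Ioo p0 p1 := hqξ ▸ hξ
  -- identification of muStar
  have hmu : muStar τ A Λ0 = (q - p0) / (p1 - p0) := by
    rw [muStar, aCoef, ← hp0, ← hp1, ← hs, ← ha, ← hq]
  have hmu0 : 0 < muStar τ A Λ0 := by
    rw [hmu]; exact div_pos (by linarith [hqmem.1]) hd
  have hmu1 : muStar τ A Λ0 < 1 := by
    rw [hmu, div_lt_one hd]; linarith [hqmem.2]
  have hQmu : (1 - muStar τ A Λ0) * p0 + muStar τ A Λ0 * p1 = q := by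
    rw [hmu]; field_simp; ring
  have hsmul : s * (p1 - p0) = hb p1 - hb p0 := by
    rw [hs]; field_simp
  -- F in terms of G r := hb r - s r
  have e1 : ∀ μ : ℝ, Fcap τ A Λ0 μ =
      (hb ((1 - μ) * p0 + μ * p1) - s * ((1 - μ) * p0 + μ * p1)) + (s * p0 - hb p0) := by
    intro μ
    have hne : p1 - p0 ≠ 0 := ne_of_gt hd
    rw [Fcap, ← hp0, ← hp1, hs]
    field_simp
    ring
  -- strict maximization of G at q on [p0, p1]
  have hGq : ∀ r ∈ Set.Icc p0 p1, r ≠ q → hb r - s * r < hb q - s * q := by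
    intro r hr hrq
    have hGcont : Continuous fun r : ℝ => hb r - s * r :=
      hb_continuous.sub (continuous_const.mul continuous_id)
    have hGd : ∀ x : ℝ, 0 < x → x < 1 →
        HasDerivAt (fun r : ℝ => hb r - s * r) (Real.log (1 - x) - Real.log x - s) x := by
      intro x hx0 hx1
      have := (hb_hasDerivAt hx0 hx1).sub ((hasDerivAt_id x).const_mul s)
      exact this.congr_deriv (by ring)
    have hmono : StrictMonoOn (fun r : ℝ => hb r - s * r) (Set.Icc p0 q) := by
      apply strictMonoOn_of_deriv_pos (convex_Icc _ _) hGcont.continuousOn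
      intro x hx
      rw [interior_Icc] at hx
      have hx0 : 0 < x := h0.trans_lt hx.1
      have hx1 : x < 1 := hx.2.trans hq1
      rw [(hGd x hx0 hx1).deriv]
      have := hDanti x q hx0 hx.2 hq1
      rw [hDq] at this; linarith
    have hanti : StrictAntiOn (fun r : ℝ => hb r - s * r) (Set.Icc q p1) := by
      apply strictAntiOn_of_deriv_neg (convex_Icc _ _) hGcont.continuousOn
      intro x hx
      rw [interior_Icc] at hx
      have hx0 : 0 < x := hq0.trans hx.1
      have hx1 : x < 1 := hx.2.trans h1
      rw [(hGd x hx0 hx1).deriv]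
      have := hDanti q x hq0 hx.1 hx1
      rw [hDq] at this; linarith
    rcases lt_or_gt_of_ne hrq with h | h
    · exact hmono ⟨hr.1, h.le⟩ ⟨hqmem.1.le, le_refl q⟩ h
    · exact hanti ⟨le_refl q, hqmem.2.le⟩ ⟨h.le, hr.2⟩ h
  -- strict comparison of F
  have hcomp : ∀ μ ∈ Set.Icc (0:ℝ) 1, μ ≠ muStar τ A Λ0 →
      Fcap τ A Λ0 μ < Fcap τ A Λ0 (muStar τ A Λ0) := by
    intro μ hμ hne
    have hQmem : (1 - μ) * p0 + μ * p1 ∈ Set.Icc p0 p1 := by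
      constructor <;> nlinarith [hμ.1, hμ.2, h01]
    have hQne : (1 - μ) * p0 + μ * p1 ≠ q := by
      intro h
      apply hne
      rw [hmu, eq_div_iff (ne_of_gt hd)]
      linarith [h]
    have hGlt := hGq _ hQmem hQne
    rw [e1 μ, e1 (muStar τ A Λ0), hQmu]
    linarith
  have hle : ∀ μ ∈ Set.Icc (0:ℝ) 1, Fcap τ A Λ0 μ ≤ Fcap τ A Λ0 (muStar τ A Λ0) := by
    intro μ hμ
    by_cases h : μ = muStar τ A Λ0
    · rw [h]
    · exact (hcomp μ hμ h).le
  refine ⟨⟨hmu0, hmu1⟩, ?_, ?_⟩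
  · intro μ hμ
    refine ⟨hle μ hμ, ?_, fun h => by rw [h]⟩
    intro heq
    by_contra hne
    exact absurd heq (ne_of_lt (hcomp μ hμ hne))
  · haveI : Nonempty (Set.Icc (0:ℝ) 1) := ⟨⟨0, by constructor <;> norm_num⟩⟩
    have hbdd : BddAbove (Set.range fun μ : Set.Icc (0:ℝ) 1 => Fcap τ A Λ0 μ) := by
      refine ⟨Fcap τ A Λ0 (muStar τ A Λ0), ?_⟩
      rintro _ ⟨μ, rfl⟩
      exact hle μ μ.2
    have hsup : (⨆ μ : Set.Icc (0:ℝ) 1, Fcap τ A Λ0 μ) = Fcap τ A Λ0 (muStar τ A Λ0) := by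
      apply le_antisymm
      · exact ciSup_le fun μ => hle μ μ.2
      · exact le_ciSup hbdd (⟨muStar τ A Λ0, hmu0.le, hmu1.le⟩ : Set.Icc (0:ℝ) 1)
    rw [hsup]
end

section
/- Fix peak power A > 0 and background intensity Λ0 > 0, set s = Λ0/A, and regard μ*(τ) and F as functions of the dead time τ > 0. Then as τ → 0⁺: (i) μ*(τ) converges to μ̄ = (1+s)^{1+s}/(e·s^s) − s; and (ii) the capacity (1/τ)·F(μ*(τ)) converges to the continuous Poisson channel capacity A·[−(μ̄+s)·ln(μ̄+s) + μ̄·(1+s)·ln(1+s) + (1−μ̄)·s·ln s]. -/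
open Real Filter Set Topology

noncomputable def gfun (x τ : ℝ) : ℝ :=
  -(pdet τ x / τ) * Real.log (pdet τ x / τ) + x * Real.exp (-(x * τ))

lemma pdet_pos {x τ : ℝ} (hx : 0 < x) (hτ : 0 < τ) : 0 < pdet τ x := by
  have : Real.exp (-(x*τ)) < 1 := by
    rw [Real.exp_lt_one_iff]; nlinarith [mul_pos hx hτ]
  simp only [pdet, sub_pos]; linarith

lemma one_sub_pdet (x τ : ℝ) : 1 - pdet τ x = Real.exp (-(x*τ)) := by simp [pdet]

lemma pdet_sub_pos {A Λ0 τ : ℝ} (hA : 0 < A) (hΛ0 : 0 < Λ0) (hτ : 0 < τ) :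
    0 < pdet τ (A + Λ0) - pdet τ Λ0 := by
  have : Real.exp (-((A + Λ0) * τ)) < Real.exp (-(Λ0 * τ)) := by
    apply Real.exp_lt_exp.mpr; nlinarith [mul_pos hA hτ]
  simp only [pdet]; linarith

lemma hb_pdet {x τ : ℝ} (hx : 0 < x) (hτ : 0 < τ) :
    hb (pdet τ x) = τ * gfun x τ - pdet τ x * Real.log τ := by
  have hp : 0 < pdet τ x := pdet_pos hx hτ
  have hlog : Real.log (pdet τ x) = Real.log (pdet τ x / τ) + Real.log τ := by
    rw [Real.log_div hp.ne' hτ.ne']; ring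
  rw [hb, one_sub_pdet, hlog, Real.log_exp, gfun]
  field_simp
  ring

lemma hb_div {a τ : ℝ} (ha : 0 < a) (hτ : 0 < τ) :
    hb (a / (1 + a)) = -(a/(1+a)) * (Real.log (a/(1+a)/τ) + Real.log τ) +
      Real.log (1+a) / (1+a) := by
  have h1a : (0:ℝ) < 1 + a := by linarith
  have hq : 0 < a / (1+a) := div_pos ha h1a
  have h1q : 1 - a/(1+a) = 1/(1+a) := by field_simp; ring
  have hlogq : Real.log (a/(1+a)) = Real.log (a/(1+a)/τ) + Real.log τ := by
    rw [Real.log_div hq.ne' hτ.ne']; ring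
  rw [hb, h1q, hlogq, one_div, Real.log_inv]
  field_simp
  ring

lemma tendsto_pdet_div (x : ℝ) :
    Tendsto (fun τ => pdet τ x / τ) (𝓝[>] (0:ℝ)) (𝓝 x) := by
  have hd : HasDerivAt (fun τ : ℝ => pdet τ x) x 0 := by
    have h1 : HasDerivAt (fun τ : ℝ => -(x*τ)) (-x) 0 := by
      simpa using ((hasDerivAt_neg (0:ℝ)).const_mul x)
    have h3 := (h1.exp).const_sub 1
    simpa [pdet] using h3
  have h4 : Tendsto (slope (fun τ : ℝ => pdet τ x) 0) (𝓝[>] (0:ℝ)) (𝓝 x) :=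
    (hasDerivAt_iff_tendsto_slope.mp hd).mono_left
      (nhdsWithin_mono _ (fun y hy => ne_of_gt hy))
  refine h4.congr' ?_
  filter_upwards [self_mem_nhdsWithin] with τ hτ
  simp [slope_def_field, pdet, div_eq_div_iff]

lemma tendsto_gfun {x : ℝ} (hx : 0 < x) :
    Tendsto (gfun x) (𝓝[>] (0:ℝ)) (𝓝 (-(x * Real.log x) + x)) := by
  have hlog : Tendsto (fun τ => Real.log (pdet τ x / τ)) (𝓝[>] (0:ℝ)) (𝓝 (Real.log x)) :=
    (Real.continuousAt_log hx.ne').tendsto.comp (tendsto_pdet_div x)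
  have h1 : Tendsto (fun τ => -(pdet τ x / τ * Real.log (pdet τ x / τ)))
      (𝓝[>] (0:ℝ)) (𝓝 (-(x * Real.log x))) := ((tendsto_pdet_div x).mul hlog).neg
  have h2 : Tendsto (fun τ : ℝ => x * Real.exp (-(x * τ))) (𝓝[>] (0:ℝ)) (𝓝 x) := by
    have hc : Continuous (fun τ : ℝ => x * Real.exp (-(x * τ))) := by continuity
    have h3 : Tendsto (fun τ : ℝ => x * Real.exp (-(x * τ))) (𝓝[>] (0:ℝ))
        (𝓝 (x * Real.exp (-(x * 0)))) := (hc.tendsto 0).mono_left nhdsWithin_le_nhds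
    simpa using h3
  exact (h1.add h2).congr fun τ => by rw [gfun]; ring

lemma tendsto_log_slope_one :
    Tendsto (fun y : ℝ => Real.log y / (y - 1)) (𝓝[≠] (1:ℝ)) (𝓝 1) := by
  have h := hasDerivAt_iff_tendsto_slope.mp (Real.hasDerivAt_log one_ne_zero)
  rw [show ((1:ℝ))⁻¹ = 1 by norm_num] at h
  exact h.congr (fun y => by simp [slope_def_field])

/-- fix A > 0 and Λ0 > 0, set s = Λ0/A and
μ̄ = (1+s)^{1+s}/(e·s^s) − s. Then as τ → 0⁺, the optimal duty cycle μ*(τ) converges to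
μ̄ and the capacity (1/τ)·F(μ*(τ)) converges to the continuous Poisson capacity
A·[−(μ̄+s)·ln(μ̄+s) + μ̄·(1+s)·ln(1+s) + (1−μ̄)·s·ln s]. -/
theorem capacity_tendsto_Poisson_as_deadtime_to_zero (A Λ0 : ℝ)
    (hA : 0 < A) (hΛ0 : 0 < Λ0)
    (s : ℝ) (hs : s = Λ0 / A)
    (μbar : ℝ) (hμbar : μbar = (1 + s) ^ (1 + s) / (Real.exp 1 * s ^ s) - s) :
    Filter.Tendsto (fun τ : ℝ => muStar τ A Λ0)
        (nhdsWithin 0 (Set.Ioi 0)) (nhds μbar) ∧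
      Filter.Tendsto (fun τ : ℝ => (1 / τ) * Fcap τ A Λ0 (muStar τ A Λ0))
        (nhdsWithin 0 (Set.Ioi 0))
        (nhds (A * (-((μbar + s) * Real.log (μbar + s)) +
          μbar * (1 + s) * Real.log (1 + s) + (1 - μbar) * s * Real.log s))) := by
  have hAΛ : 0 < A + Λ0 := by linarith
  have hsp : 0 < s := by rw [hs]; positivity
  have h1s : (0:ℝ) < 1 + s := by linarith
  have hΛ : Λ0 = s * A := by rw [hs]; field_simp
  have e1 : Real.log (A + Λ0) = Real.log (1+s) + Real.log A := by
    rw [show A + Λ0 = (1+s) * A by rw [hΛ]; ring, Real.log_mul h1s.ne' hA.ne']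
  have e2 : Real.log Λ0 = Real.log s + Real.log A := by
    rw [hΛ, Real.log_mul hsp.ne' hA.ne']
  -- the limit of the auxiliary function E
  set LE : ℝ := Real.exp (-(((-((A + Λ0) * Real.log (A + Λ0)) + (A + Λ0)) -
      (-(Λ0 * Real.log Λ0) + Λ0)) / A)) with hLEdef
  have hLEpos : 0 < LE := Real.exp_pos _
  -- key algebraic identity: LE = A * (μbar + s)
  have hLE : LE = A * (μbar + s) := by
    have hμs : μbar + s = Real.exp (Real.log (1+s) * (1+s)) /
        (Real.exp 1 * Real.exp (Real.log s * s)) := by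
      rw [hμbar, Real.rpow_def_of_pos h1s, Real.rpow_def_of_pos hsp]; ring
    have hA' : A = Real.exp (Real.log A) := (Real.exp_log hA).symm
    rw [hμs, ← Real.exp_add, ← Real.exp_sub]
    nth_rewrite 1 [hLEdef]
    rw [show A * Real.exp (Real.log (1 + s) * (1 + s) - (1 + Real.log s * s)) =
        Real.exp (Real.log A + (Real.log (1 + s) * (1 + s) - (1 + Real.log s * s))) by
      rw [Real.exp_add, Real.exp_log hA]]
    congr 1
    rw [e1, e2, hΛ]
    field_simp
    ring
  have hμspos : 0 < μbar + s := by
    have h := hLEpos; rw [hLE] at h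
    by_contra hcon; push_neg at hcon; nlinarith
  set l := nhdsWithin (0:ℝ) (Set.Ioi 0) with hl
  have hp0 : Tendsto (fun τ => pdet τ Λ0 / τ) l (𝓝 Λ0) := tendsto_pdet_div Λ0
  have hp1 : Tendsto (fun τ => pdet τ (A+Λ0) / τ) l (𝓝 (A+Λ0)) := tendsto_pdet_div (A+Λ0)
  have hg0 : Tendsto (gfun Λ0) l (𝓝 (-(Λ0 * Real.log Λ0) + Λ0)) := tendsto_gfun hΛ0
  have hg1 : Tendsto (gfun (A+Λ0)) l (𝓝 (-((A+Λ0) * Real.log (A+Λ0)) + (A+Λ0))) :=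
    tendsto_gfun hAΛ
  have hR : Tendsto (fun τ => (pdet τ (A+Λ0) - pdet τ Λ0) / τ) l (𝓝 A) := by
    have := hp1.sub hp0
    simp only [← sub_div] at this
    simpa using this
  set E : ℝ → ℝ := fun τ => Real.exp (-((gfun (A+Λ0) τ - gfun Λ0 τ) /
      ((pdet τ (A+Λ0) - pdet τ Λ0) / τ))) with hEdef
  have hE : Tendsto E l (𝓝 LE) := by
    apply (Real.continuous_exp.tendsto _).comp
    exact (((hg1.sub hg0).div hR hA.ne').neg)
  have hEpos : ∀ τ, 0 < E τ := fun τ => Real.exp_pos _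
  have haid : ∀ τ ∈ Set.Ioi (0:ℝ), aCoef τ A Λ0 = τ * E τ := by
    intro τ hτ
    rw [Set.mem_Ioi] at hτ
    have hps : 0 < pdet τ (A+Λ0) - pdet τ Λ0 := pdet_sub_pos hA hΛ0 hτ
    rw [aCoef, hb_pdet hAΛ hτ, hb_pdet hΛ0 hτ]
    have key : (τ * gfun (A+Λ0) τ - pdet τ (A+Λ0) * Real.log τ -
        (τ * gfun Λ0 τ - pdet τ Λ0 * Real.log τ)) / (pdet τ (A+Λ0) - pdet τ Λ0) =
        (gfun (A+Λ0) τ - gfun Λ0 τ) / ((pdet τ (A+Λ0) - pdet τ Λ0) / τ) - Real.log τ := by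
      field_simp
      ring
    rw [key, show -((gfun (A+Λ0) τ - gfun Λ0 τ) / ((pdet τ (A+Λ0) - pdet τ Λ0) / τ) -
        Real.log τ) = Real.log τ + -((gfun (A+Λ0) τ - gfun Λ0 τ) /
        ((pdet τ (A+Λ0) - pdet τ Λ0) / τ)) by ring,
      Real.exp_add, Real.exp_log hτ]
  have hτ0 : Tendsto (fun τ : ℝ => τ) l (𝓝 0) := by
    have : Tendsto (fun τ : ℝ => τ) (𝓝 (0:ℝ)) (𝓝 0) := tendsto_id
    exact this.mono_left nhdsWithin_le_nhds
  have hτE : Tendsto (fun τ => τ * E τ) l (𝓝 0) := by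
    simpa using hτ0.mul hE
  have h1τE : Tendsto (fun τ => 1 + τ * E τ) l (𝓝 1) := by
    simpa using (tendsto_const_nhds.add hτE)
  -- μ* limit
  have hμid : (fun τ => (E τ / (1 + τ * E τ) - pdet τ Λ0 / τ) /
      ((pdet τ (A+Λ0) - pdet τ Λ0) / τ)) =ᶠ[l] (fun τ : ℝ => muStar τ A Λ0) := by
    filter_upwards [self_mem_nhdsWithin] with τ hτ
    rw [Set.mem_Ioi] at hτ
    have hps : 0 < pdet τ (A+Λ0) - pdet τ Λ0 := pdet_sub_pos hA hΛ0 hτ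
    have h1a : (0:ℝ) < 1 + τ * E τ := by have := hEpos τ; nlinarith
    rw [muStar, haid τ (Set.mem_Ioi.mpr hτ)]
    rw [eq_comm]
    field_simp
  have hμlim : Tendsto (fun τ : ℝ => muStar τ A Λ0) l (𝓝 μbar) := by
    have h := ((hE.div h1τE one_ne_zero).sub hp0).div hR hA.ne'
    have : (LE / 1 - Λ0) / A = μbar := by
      rw [hLE, hΛ]; field_simp; ring
    rw [this] at h
    exact h.congr' hμid
  refine ⟨hμlim, ?_⟩
  -- capacity limit
  have hapos : ∀ τ, 0 < aCoef τ A Λ0 := fun τ => Real.exp_pos _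
  have h1apos : ∀ τ, (0:ℝ) < 1 + aCoef τ A Λ0 := fun τ => by have := hapos τ; linarith
  have hq'id : (fun τ => E τ / (1 + τ * E τ)) =ᶠ[l]
      (fun τ => aCoef τ A Λ0 / (1 + aCoef τ A Λ0) / τ) := by
    filter_upwards [self_mem_nhdsWithin] with τ hτ
    rw [Set.mem_Ioi] at hτ
    rw [haid τ (Set.mem_Ioi.mpr hτ)]
    have hE' := hEpos τ
    have h1a : (0:ℝ) < 1 + τ * E τ := by nlinarith
    rw [eq_comm]
    field_simp
  have hq'div : Tendsto (fun τ => aCoef τ A Λ0 / (1 + aCoef τ A Λ0) / τ) l (𝓝 LE) := by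
    have h : Tendsto (fun τ => E τ / (1 + τ * E τ)) l (𝓝 (LE / 1)) :=
      hE.div h1τE one_ne_zero
    rw [div_one] at h
    exact h.congr' hq'id
  have hQa : ∀ τ ∈ Set.Ioi (0:ℝ),
      (1 - muStar τ A Λ0) * pdet τ Λ0 + muStar τ A Λ0 * pdet τ (A+Λ0) =
      aCoef τ A Λ0 / (1 + aCoef τ A Λ0) := by
    intro τ hτ
    have hτ' := Set.mem_Ioi.mp hτ
    have hps : 0 < pdet τ (A+Λ0) - pdet τ Λ0 := pdet_sub_pos hA hΛ0 hτ'
    have h1a := h1apos τ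
    rw [muStar]
    field_simp
    ring
  have hyE : Tendsto (fun τ => 1 + τ * E τ) l (𝓝[≠] (1:ℝ)) := by
    rw [tendsto_nhdsWithin_iff]
    refine ⟨h1τE, ?_⟩
    filter_upwards [self_mem_nhdsWithin] with τ hτ
    rw [Set.mem_Ioi] at hτ
    have := hEpos τ
    simp only [Set.mem_compl_iff, Set.mem_singleton_iff]
    nlinarith
  have hcomp : Tendsto (fun τ => Real.log (1 + τ * E τ) / (τ * E τ)) l (𝓝 1) := by
    have h := tendsto_log_slope_one.comp hyE
    exact h.congr fun τ => by simp [Function.comp]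
  have hlogterm : Tendsto (fun τ => Real.log (1 + aCoef τ A Λ0) /
      ((1 + aCoef τ A Λ0) * τ)) l (𝓝 LE) := by
    have h : Tendsto (fun τ => Real.log (1 + τ * E τ) / (τ * E τ) * E τ / (1 + τ * E τ))
        l (𝓝 (1 * LE / 1)) := (hcomp.mul hE).div h1τE one_ne_zero
    rw [one_mul, div_one] at h
    refine h.congr' ?_
    filter_upwards [self_mem_nhdsWithin] with τ hτ
    rw [Set.mem_Ioi] at hτ
    rw [haid τ (Set.mem_Ioi.mpr hτ)]
    have hE' := hEpos τ
    have h1a : (0:ℝ) < 1 + τ * E τ := by nlinarith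
    rw [eq_comm]
    field_simp
  have hFid : (fun τ => -(aCoef τ A Λ0 / (1 + aCoef τ A Λ0) / τ) *
      Real.log (aCoef τ A Λ0 / (1 + aCoef τ A Λ0) / τ) +
      Real.log (1 + aCoef τ A Λ0) / ((1 + aCoef τ A Λ0) * τ) -
      (1 - muStar τ A Λ0) * gfun Λ0 τ - muStar τ A Λ0 * gfun (A+Λ0) τ) =ᶠ[l]
      (fun τ => (1/τ) * Fcap τ A Λ0 (muStar τ A Λ0)) := by
    filter_upwards [self_mem_nhdsWithin] with τ hτ
    rw [Set.mem_Ioi] at hτ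
    have hq := hQa τ (Set.mem_Ioi.mpr hτ)
    have h1a := h1apos τ
    rw [Fcap, hq, hb_div (hapos τ) hτ, hb_pdet hΛ0 hτ, hb_pdet hAΛ hτ, ← hq]
    field_simp
    ring
  have hloglim : Tendsto (fun τ => Real.log (aCoef τ A Λ0 / (1 + aCoef τ A Λ0) / τ))
      l (𝓝 (Real.log LE)) :=
    (Real.continuousAt_log hLEpos.ne').tendsto.comp hq'div
  have hql : Tendsto (fun τ => -(aCoef τ A Λ0 / (1 + aCoef τ A Λ0) / τ) *
      Real.log (aCoef τ A Λ0 / (1 + aCoef τ A Λ0) / τ)) l (𝓝 (-(LE * Real.log LE))) :=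
    ((hq'div.mul hloglim).neg).congr fun τ => by ring
  have hbig : Tendsto (fun τ => -(aCoef τ A Λ0 / (1 + aCoef τ A Λ0) / τ) *
      Real.log (aCoef τ A Λ0 / (1 + aCoef τ A Λ0) / τ) +
      Real.log (1 + aCoef τ A Λ0) / ((1 + aCoef τ A Λ0) * τ) -
      (1 - muStar τ A Λ0) * gfun Λ0 τ - muStar τ A Λ0 * gfun (A+Λ0) τ) l
      (𝓝 (-(LE * Real.log LE) + LE - (1-μbar) * (-(Λ0 * Real.log Λ0) + Λ0) -
        μbar * (-((A+Λ0) * Real.log (A+Λ0)) + (A+Λ0)))) :=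
    ((hql.add hlogterm).sub ((tendsto_const_nhds.sub hμlim).mul hg0)).sub (hμlim.mul hg1)
  have hfin := hbig.congr' hFid
  have e3 : Real.log LE = Real.log A + Real.log (μbar + s) := by
    rw [hLE, Real.log_mul hA.ne' hμspos.ne']
  have hCeq : -(LE * Real.log LE) + LE - (1-μbar) * (-(Λ0 * Real.log Λ0) + Λ0) -
      μbar * (-((A+Λ0) * Real.log (A+Λ0)) + (A+Λ0)) =
      A * (-((μbar + s) * Real.log (μbar + s)) +
        μbar * (1 + s) * Real.log (1 + s) + (1 - μbar) * s * Real.log s) := by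
    rw [e3, hLE, e1, e2, hΛ]
    ring
  rw [← hCeq]
  exact hfin
end
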